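/- arXiv:2401.07843 — 8 statements merged into one kernel-verified Lean document; each statement's English description precedes it below -/
import Mathlib

section
/- Let n ≥ 1 and let P, Q, R ∈ ℝ[x,y,z] be homogeneous polynomials with deg P = deg Q = n and deg R ≤ n. If χ = (P,Q,R) is a vector field on 𝕋², then R = 0. -/
open MvPolynomial

/-- Derivative of `g` along the polynomial vector field `(P, Q, R)` in `ℝ[x,y,z]`. -/
noncomputable def vf (P Q R g : MvPolynomial (Fin 3) ℝ) : MvPolynomial (Fin 3) ℝ :=
  P * pderiv 0 g + Q * pderiv 1 g + R * pderiv 2 g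

/-- The defining polynomial `F = (x²+y²-a²)² + z² - 1` of the torus `𝕋²`. -/
noncomputable def torusF (a : ℝ) : MvPolynomial (Fin 3) ℝ :=
  (X 0 ^ 2 + X 1 ^ 2 - C (a ^ 2)) ^ 2 + X 2 ^ 2 - 1

/-- `(P, Q, R)` is a polynomial vector field on the torus `𝕋²`. -/
def IsVFOnTorus (a : ℝ) (P Q R : MvPolynomial (Fin 3) ℝ) : Prop :=
  ∃ K : MvPolynomial (Fin 3) ℝ, vf P Q R (torusF a) = K * torusF a

namespace TorusProof

/-- `g(t) = 1 - (t²-a²)²`. -/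
noncomputable def gP (a : ℝ) : Polynomial ℝ :=
  Polynomial.C (1 - a ^ 4) + Polynomial.C (2 * a ^ 2) * Polynomial.X ^ 2 - Polynomial.X ^ 4

lemma gP_eq (a : ℝ) : gP a = 1 - (Polynomial.X ^ 2 - Polynomial.C (a ^ 2)) ^ 2 := by
  have h1 : Polynomial.C (1 - a ^ 4) = 1 - Polynomial.C (a ^ 2) ^ 2 := by
    rw [← map_pow, ← map_one (Polynomial.C (R := ℝ)), ← map_sub]
    congr 1; ring
  have h2 : Polynomial.C (2 * a ^ 2) = 2 * Polynomial.C (a ^ 2) := by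
    rw [map_mul, map_ofNat]
  rw [gP, h1, h2]; ring

lemma gP_coeff_four (a : ℝ) : (gP a).coeff 4 = -1 := by
  simp only [gP, Polynomial.coeff_add, Polynomial.coeff_sub, Polynomial.coeff_C_mul,
    Polynomial.coeff_X_pow, Polynomial.coeff_C]
  norm_num

lemma gP_coeff_zero (a : ℝ) : (gP a).coeff 0 = 1 - a ^ 4 := by
  simp only [gP, Polynomial.coeff_add, Polynomial.coeff_sub, Polynomial.coeff_C_mul,
    Polynomial.coeff_X_pow, Polynomial.coeff_C]
  norm_num

lemma gP_eval_zero (a : ℝ) : (gP a).eval 0 = 1 - a ^ 4 := by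
  simp [gP]

lemma gP_ne_zero (a : ℝ) : gP a ≠ 0 := fun h => by
  have := gP_coeff_four a; rw [h] at this; simp at this

lemma gP_natDegree (a : ℝ) : (gP a).natDegree = 4 := by
  unfold gP
  compute_degree!

lemma gP_natTrailingDegree {a : ℝ} (ha : 1 < a) : (gP a).natTrailingDegree = 0 := by
  have h4 : (1:ℝ) < a ^ 4 := one_lt_pow₀ ha (by norm_num)
  exact Polynomial.natTrailingDegree_eq_zero.mpr (Or.inr (by rw [gP_coeff_zero]; intro h; nlinarith))


lemma gpow_natDegree (a : ℝ) (i : ℕ) : (gP a ^ i).natDegree = 4 * i := by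
  rw [Polynomial.natDegree_pow, gP_natDegree]; ring

lemma gpow_coeff_top (a : ℝ) (i : ℕ) : (gP a ^ i).coeff (4 * i) = (-1) ^ i := by
  have h := gpow_natDegree a i
  rw [show (4*i) = (gP a ^ i).natDegree from h.symm, Polynomial.coeff_natDegree,
    Polynomial.leadingCoeff_pow]
  congr 1
  rw [Polynomial.leadingCoeff, gP_natDegree, gP_coeff_four]

lemma gpow_coeff_hi (a : ℝ) {i k : ℕ} (h : 4 * i < k) : (gP a ^ i).coeff k = 0 :=
  Polynomial.coeff_eq_zero_of_natDegree_lt (by rw [gpow_natDegree]; omega)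

lemma gpow_coeff_zero (a : ℝ) (i : ℕ) : (gP a ^ i).coeff 0 = (1 - a ^ 4) ^ i := by
  rw [Polynomial.coeff_zero_eq_eval_zero, Polynomial.eval_pow, gP_eval_zero]


/-- term `g^i * t^(d-2i)` -/
noncomputable def trm (a : ℝ) (d i : ℕ) : Polynomial ℝ :=
  gP a ^ i * Polynomial.X ^ (d - 2*i)

lemma trm_coeff (a : ℝ) (d i k : ℕ) :
    (trm a d i).coeff k =
      if d - 2*i ≤ k then (gP a ^ i).coeff (k - (d - 2*i)) else 0 :=
  Polynomial.coeff_mul_X_pow' _ _ _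

/-- structured sum -/
noncomputable def vsum (a : ℝ) (d : ℕ) (lam : ℕ → ℝ) : Polynomial ℝ :=
  ∑ i ∈ Finset.range (d/2+1), Polynomial.C (lam i) * trm a d i

section vsumlemmas

variable {a : ℝ} {d : ℕ} {lam : ℕ → ℝ} {J : ℕ}

lemma vsum_coeff_top (hJd : J ≤ d/2) (hhi : ∀ i, i ≤ d/2 → J < i → lam i = 0) :
    (vsum a d lam).coeff (d + 2*J) = lam J * (-1) ^ J := by
  rw [vsum, Polynomial.finset_sum_coeff]
  rw [Finset.sum_eq_single J]
  · rw [Polynomial.coeff_C_mul, trm_coeff, if_pos (by omega),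
      show (d + 2*J) - (d - 2*J) = 4*J by omega, gpow_coeff_top]
  · intro i hi hne
    rw [Finset.mem_range] at hi
    rcases lt_or_gt_of_ne hne with h | h
    · rw [Polynomial.coeff_C_mul, trm_coeff, if_pos (by omega),
        gpow_coeff_hi a (by omega), mul_zero]
    · rw [hhi i (by omega) h, map_zero, zero_mul, Polynomial.coeff_zero]
  · intro h; exact absurd (Finset.mem_range.mpr (by omega)) h

lemma vsum_coeff_hi (hJd : J ≤ d/2) (hhi : ∀ i, i ≤ d/2 → J < i → lam i = 0)
    {k : ℕ} (hk : d + 2*J < k) : (vsum a d lam).coeff k = 0 := by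
  rw [vsum, Polynomial.finset_sum_coeff]
  apply Finset.sum_eq_zero
  intro i hi
  rw [Finset.mem_range] at hi
  by_cases h : i ≤ J
  · rw [Polynomial.coeff_C_mul, trm_coeff, if_pos (by omega),
      gpow_coeff_hi a (by omega), mul_zero]
  · rw [hhi i (by omega) (by omega), map_zero, zero_mul, Polynomial.coeff_zero]

lemma vsum_coeff_bot (hJd : J ≤ d/2) (hhi : ∀ i, i ≤ d/2 → J < i → lam i = 0) :
    (vsum a d lam).coeff (d - 2*J) = lam J * (1 - a^4) ^ J := by
  rw [vsum, Polynomial.finset_sum_coeff]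
  rw [Finset.sum_eq_single J]
  · rw [Polynomial.coeff_C_mul, trm_coeff, if_pos (by omega),
      show (d - 2*J) - (d - 2*J) = 0 by omega, gpow_coeff_zero]
  · intro i hi hne
    rw [Finset.mem_range] at hi
    rcases lt_or_gt_of_ne hne with h | h
    · rw [Polynomial.coeff_C_mul, trm_coeff, if_neg (by omega), mul_zero]
    · rw [hhi i (by omega) h, map_zero, zero_mul, Polynomial.coeff_zero]
  · intro h; exact absurd (Finset.mem_range.mpr (by omega)) h

lemma vsum_coeff_lo (hJd : J ≤ d/2) (hhi : ∀ i, i ≤ d/2 → J < i → lam i = 0)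
    {k : ℕ} (hk : k < d - 2*J) : (vsum a d lam).coeff k = 0 := by
  rw [vsum, Polynomial.finset_sum_coeff]
  apply Finset.sum_eq_zero
  intro i hi
  rw [Finset.mem_range] at hi
  by_cases h : i ≤ J
  · rw [Polynomial.coeff_C_mul, trm_coeff, if_neg (by omega), mul_zero]
  · rw [hhi i (by omega) (by omega), map_zero, zero_mul, Polynomial.coeff_zero]

lemma vsum_all_zero (h : ∀ i, i ≤ d/2 → lam i = 0) : vsum a d lam = 0 := by
  rw [vsum]
  apply Finset.sum_eq_zero
  intro i hi
  rw [Finset.mem_range] at hi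
  rw [h i (by omega), map_zero, zero_mul]

lemma vsum_eq_zero_iff (ha : 1 < a) (h : vsum a d lam = 0) : ∀ i, i ≤ d/2 → lam i = 0 := by
  by_contra hc
  push_neg at hc
  obtain ⟨i₀, hi₀, h0⟩ := hc
  classical
  set sfin := (Finset.range (d/2+1)).filter (fun i => lam i ≠ 0) with hsfin
  have hne : sfin.Nonempty := ⟨i₀, by
    rw [hsfin, Finset.mem_filter, Finset.mem_range]; exact ⟨by omega, h0⟩⟩
  set J := sfin.max' hne with hJdef
  have hJmem : J ∈ sfin := sfin.max'_mem hne
  rw [hsfin, Finset.mem_filter, Finset.mem_range] at hJmem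
  have hhi : ∀ i, i ≤ d/2 → J < i → lam i = 0 := by
    intro i hi hJi
    by_contra hne'
    have : i ∈ sfin := by rw [hsfin, Finset.mem_filter, Finset.mem_range]; exact ⟨by omega, hne'⟩
    exact absurd (sfin.le_max' i this) (by omega)
  have := vsum_coeff_top (a := a) (by omega) hhi
  rw [h, Polynomial.coeff_zero] at this
  have : lam J = 0 := by
    rcases mul_eq_zero.mp this.symm with h' | h'
    · exact h'
    · exact absurd h' (pow_ne_zero _ (by norm_num))
  exact hJmem.2 this

lemma vsum_spec (ha : 1 < a) (h : vsum a d lam ≠ 0) :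
    ∃ J, 2*J ≤ d ∧ (vsum a d lam).natDegree = d + 2*J ∧
      (vsum a d lam).natTrailingDegree = d - 2*J := by
  classical
  set sfin := (Finset.range (d/2+1)).filter (fun i => lam i ≠ 0) with hsfin
  have hne : sfin.Nonempty := by
    by_contra hc
    rw [Finset.not_nonempty_iff_eq_empty] at hc
    refine h (vsum_all_zero ?_)
    intro i hi
    by_contra h0
    have : i ∈ sfin := by rw [hsfin, Finset.mem_filter, Finset.mem_range]; exact ⟨by omega, h0⟩
    rw [hc] at this; exact absurd this (Finset.notMem_empty i)
  set J := sfin.max' hne with hJdef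
  have hJmem : J ∈ sfin := sfin.max'_mem hne
  rw [hsfin, Finset.mem_filter, Finset.mem_range] at hJmem
  have hhi : ∀ i, i ≤ d/2 → J < i → lam i = 0 := by
    intro i hi hJi
    by_contra hne'
    have : i ∈ sfin := by rw [hsfin, Finset.mem_filter, Finset.mem_range]; exact ⟨by omega, hne'⟩
    exact absurd (sfin.le_max' i this) (by omega)
  have hJd : J ≤ d/2 := by omega
  have ha4 : (1:ℝ) - a^4 ≠ 0 := by
    have : (1:ℝ) < a ^ 4 := one_lt_pow₀ ha (by norm_num)
    intro h'; nlinarith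
  have htop : (vsum a d lam).coeff (d + 2*J) ≠ 0 := by
    rw [vsum_coeff_top hJd hhi]
    exact mul_ne_zero hJmem.2 (pow_ne_zero _ (by norm_num))
  have hbot : (vsum a d lam).coeff (d - 2*J) ≠ 0 := by
    rw [vsum_coeff_bot hJd hhi]
    exact mul_ne_zero hJmem.2 (pow_ne_zero _ ha4)
  refine ⟨J, by omega, ?_, ?_⟩
  · refine le_antisymm ?_ (Polynomial.le_natDegree_of_ne_zero htop)
    rw [Polynomial.natDegree_le_iff_coeff_eq_zero]
    intro k hk
    exact vsum_coeff_hi hJd hhi hk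
  · refine le_antisymm (Polynomial.natTrailingDegree_le_of_ne_zero hbot) ?_
    exact Polynomial.le_natTrailingDegree h (fun k hk => vsum_coeff_lo hJd hhi hk)

end vsumlemmas


section JeJo

variable (a : ℝ) (M : ℕ)

/-- even-part reduction: substitute `z² ↦ g` in the even `z`-coefficients -/
noncomputable def Je (V : Polynomial (Polynomial ℝ)) : Polynomial ℝ :=
  ∑ i ∈ Finset.range M, gP a ^ i * V.coeff (2*i)

/-- odd-part reduction -/
noncomputable def Jo (V : Polynomial (Polynomial ℝ)) : Polynomial ℝ :=
  ∑ i ∈ Finset.range M, gP a ^ i * V.coeff (2*i+1)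

variable {U V W : Polynomial (Polynomial ℝ)}

lemma Je_add : Je a M (U + V) = Je a M U + Je a M V := by
  simp [Je, Polynomial.coeff_add, mul_add, Finset.sum_add_distrib]

lemma Jo_add : Jo a M (U + V) = Jo a M U + Jo a M V := by
  simp [Jo, Polynomial.coeff_add, mul_add, Finset.sum_add_distrib]

lemma Je_sub : Je a M (U - V) = Je a M U - Je a M V := by
  simp [Je, Polynomial.coeff_sub, mul_sub, Finset.sum_sub_distrib]

lemma Jo_sub : Jo a M (U - V) = Jo a M U - Jo a M V := by
  simp [Jo, Polynomial.coeff_sub, mul_sub, Finset.sum_sub_distrib]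

lemma Je_C_mul (u : Polynomial ℝ) : Je a M (Polynomial.C u * V) = u * Je a M V := by
  rw [Je, Je, Finset.mul_sum]
  refine Finset.sum_congr rfl fun i _ => ?_
  rw [Polynomial.coeff_C_mul]; ring

lemma Jo_C_mul (u : Polynomial ℝ) : Jo a M (Polynomial.C u * V) = u * Jo a M V := by
  rw [Jo, Jo, Finset.mul_sum]
  refine Finset.sum_congr rfl fun i _ => ?_
  rw [Polynomial.coeff_C_mul]; ring

lemma Jo_X_mul : Jo a M (Polynomial.X * V) = Je a M V := by
  rw [Jo, Je]
  refine Finset.sum_congr rfl fun i _ => ?_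
  rw [Polynomial.coeff_X_mul]

lemma Je_X_mul (hV : V.coeff (2*M - 1) = 0) :
    Je a M (Polynomial.X * V) = gP a * Jo a M V := by
  cases M with
  | zero => simp [Je, Jo]
  | succ M' =>
    rw [Je, Finset.sum_range_succ' _ M', Jo, Finset.sum_range_succ _ M']
    have h0 : gP a ^ 0 * (Polynomial.X * V).coeff (2*0) = 0 := by
      norm_num [Polynomial.mul_coeff_zero, Polynomial.coeff_X_zero]
    have hlast : V.coeff (2*M'+1) = 0 := by
      have h2 : 2*(M'+1) - 1 = 2*M'+1 := by omega
      rwa [h2] at hV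
    rw [h0, hlast, mul_zero, add_zero, add_zero, Finset.mul_sum]
    refine Finset.sum_congr rfl fun i _ => ?_
    have h3 : 2*(i+1) = (2*i+1)+1 := by omega
    rw [h3, Polynomial.coeff_X_mul, pow_succ]
    ring

lemma Je_X_sq_mul (hV : V.coeff (2*M - 2) = 0) :
    Je a M (Polynomial.X^2 * V) = gP a * Je a M V := by
  have h1 : Polynomial.X^2 * V = Polynomial.X * (Polynomial.X * V) := by ring
  have h2 : (Polynomial.X * V).coeff (2*M - 1) = 0 := by
    cases M with
    | zero => norm_num [Polynomial.mul_coeff_zero, Polynomial.coeff_X_zero]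
    | succ M' =>
      have h3 : 2*(M'+1) - 1 = (2*(M'+1) - 2) + 1 := by omega
      rw [h3, Polynomial.coeff_X_mul]
      exact hV
  rw [h1, Je_X_mul a _ h2, Jo_X_mul]

lemma Jo_X_sq_mul (hV : V.coeff (2*M - 1) = 0) :
    Jo a M (Polynomial.X^2 * V) = gP a * Jo a M V := by
  have h1 : Polynomial.X^2 * V = Polynomial.X * (Polynomial.X * V) := by ring
  rw [h1, Jo_X_mul, Je_X_mul a _ hV]

lemma Je_mul_torus (hW : W.coeff (2*M - 2) = 0) :
    Je a M (W * (Polynomial.X^2 - Polynomial.C (gP a))) = 0 := by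
  have h1 : W * (Polynomial.X^2 - Polynomial.C (gP a))
      = Polynomial.X^2 * W - Polynomial.C (gP a) * W := by ring
  rw [h1, Je_sub, Je_X_sq_mul a M hW, Je_C_mul, sub_self]

lemma Jo_mul_torus (hW : W.coeff (2*M - 1) = 0) :
    Jo a M (W * (Polynomial.X^2 - Polynomial.C (gP a))) = 0 := by
  have h1 : W * (Polynomial.X^2 - Polynomial.C (gP a))
      = Polynomial.X^2 * W - Polynomial.C (gP a) * W := by ring
  rw [h1, Jo_sub, Jo_X_sq_mul a M hW, Jo_C_mul, sub_self]

end JeJo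


section PhiSec

variable (c s : ℝ)

/-- substitution `x ↦ c·t, y ↦ s·t, z ↦ z` into `(ℝ[t])[z]` -/
noncomputable def Phi : MvPolynomial (Fin 3) ℝ →ₐ[ℝ] Polynomial (Polynomial ℝ) :=
  MvPolynomial.aeval
    ![Polynomial.C (Polynomial.C c * Polynomial.X),
      Polynomial.C (Polynomial.C s * Polynomial.X),
      Polynomial.X]

lemma Phi_X0 : Phi c s (X 0) = Polynomial.C (Polynomial.C c * Polynomial.X) := by
  simp [Phi]

lemma Phi_X1 : Phi c s (X 1) = Polynomial.C (Polynomial.C s * Polynomial.X) := by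
  simp [Phi]

lemma Phi_X2 : Phi c s (X 2) = Polynomial.X := by
  simp [Phi]

lemma Phi_C (r : ℝ) : Phi c s (C r) = Polynomial.C (Polynomial.C r) := by
  simp [Phi, algebraMap_eq]

lemma fin3_degree (u : Fin 3 →₀ ℕ) : u.degree = u 0 + u 1 + u 2 := by
  rw [Finsupp.degree_apply, Finset.sum_subset (Finset.subset_univ u.support)]
  · simp [Fin.sum_univ_three]
  · intro x _ hx; simpa using Finsupp.notMem_support_iff.mp hx

lemma Phi_monomial (u : Fin 3 →₀ ℕ) (r : ℝ) :
    Phi c s (monomial u r) =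
      Polynomial.C (Polynomial.C (r * c ^ (u 0) * s ^ (u 1)) * Polynomial.X ^ (u 0 + u 1))
        * Polynomial.X ^ (u 2) := by
  rw [Phi, aeval_monomial, Finsupp.prod_pow]
  rw [Fin.prod_univ_three]
  simp only [Matrix.cons_val_zero, Matrix.cons_val_one, Matrix.head_cons,
    Matrix.cons_val_two, Matrix.tail_cons]
  have halg : algebraMap ℝ (Polynomial (Polynomial ℝ)) r = Polynomial.C (Polynomial.C r) := by
    rw [Polynomial.algebraMap_apply, Polynomial.algebraMap_apply]
    simp [Polynomial.algebraMap_apply]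
  rw [halg]
  simp only [map_mul, map_pow, pow_add]
  ring

variable {H : MvPolynomial (Fin 3) ℝ} {d : ℕ}

lemma phi_coeff_zero (hH : H.IsHomogeneous d) {k : ℕ} (hk : d < k) :
    (Phi c s H).coeff k = 0 := by
  conv_lhs => rw [H.as_sum]
  rw [map_sum, Polynomial.finset_sum_coeff]
  apply Finset.sum_eq_zero
  intro u hu
  have hdeg : u 0 + u 1 + u 2 = d := by
    rw [← fin3_degree]
    by_contra hne
    exact (MvPolynomial.mem_support_iff.mp hu) (hH.coeff_eq_zero hne)
  rw [Phi_monomial, Polynomial.coeff_C_mul, Polynomial.coeff_X_pow, if_neg (by omega), mul_zero]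

lemma phi_coeff_struct (hH : H.IsHomogeneous d) (k : ℕ) :
    ∃ ρ : ℝ, (Phi c s H).coeff k = Polynomial.C ρ * Polynomial.X ^ (d - k) := by
  by_cases hk : k ≤ d
  · have hmem : (Phi c s H).coeff k ∈
        Submodule.span ℝ {(Polynomial.X : Polynomial ℝ) ^ (d - k)} := by
      rw [H.as_sum, map_sum, Polynomial.finset_sum_coeff]
      apply Submodule.sum_mem
      intro u hu
      have hdeg : u 0 + u 1 + u 2 = d := by
        rw [← fin3_degree]
        by_contra hne
        exact (MvPolynomial.mem_support_iff.mp hu) (hH.coeff_eq_zero hne)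
      rw [Phi_monomial, Polynomial.coeff_C_mul, Polynomial.coeff_X_pow]
      by_cases h2 : u 2 = k
      · rw [if_pos h2.symm, mul_one]
        have : u 0 + u 1 = d - k := by omega
        rw [this, ← Polynomial.smul_eq_C_mul]
        exact Submodule.smul_mem _ _ (Submodule.mem_span_singleton_self _)
      · rw [if_neg (fun h => h2 h.symm), mul_zero]
        exact Submodule.zero_mem _
    obtain ⟨ρ, hρ⟩ := Submodule.mem_span_singleton.mp hmem
    exact ⟨ρ, by rw [← hρ, Polynomial.smul_eq_C_mul]⟩
  · exact ⟨0, by rw [phi_coeff_zero c s hH (by omega), map_zero, zero_mul]⟩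

end PhiSec


lemma chiF (a : ℝ) (P Q R : MvPolynomial (Fin 3) ℝ) :
    vf P Q R (torusF a) =
      (4 * (X 0 ^ 2 + X 1 ^ 2 - C (a ^ 2))) * (X 0 * P + X 1 * Q) + (2 * X 2) * R := by
  have h0 : pderiv (0 : Fin 3) (torusF a) = 4 * X 0 * (X 0 ^ 2 + X 1 ^ 2 - C (a ^ 2)) := by
    simp [torusF, pderiv_X]
    ring
  have h1 : pderiv (1 : Fin 3) (torusF a) = 4 * X 1 * (X 0 ^ 2 + X 1 ^ 2 - C (a ^ 2)) := by
    simp [torusF, pderiv_X]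
    ring
  have h2 : pderiv (2 : Fin 3) (torusF a) = 2 * X 2 := by
    simp [torusF, pderiv_X]
  rw [vf, h0, h1, h2]
  ring

section PhiImages

variable {c s : ℝ} (hcs : c ^ 2 + s ^ 2 = 1) (a : ℝ)

include hcs

lemma Phi_S :
    Phi c s (X 0 ^ 2 + X 1 ^ 2 - C (a ^ 2))
      = Polynomial.C (Polynomial.X ^ 2 - Polynomial.C (a ^ 2)) := by
  rw [map_sub, map_add, map_pow, map_pow, Phi_X0, Phi_X1, Phi_C]
  rw [← map_pow, ← map_pow, ← map_add, ← map_sub]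
  congr 1
  have hC : Polynomial.C c ^ 2 + Polynomial.C s ^ 2 = (1 : Polynomial ℝ) := by
    rw [← map_pow, ← map_pow, ← map_add, hcs, map_one]
  linear_combination (Polynomial.X : Polynomial ℝ) ^ 2 * hC

lemma Phi_torusF : Phi c s (torusF a) = Polynomial.X ^ 2 - Polynomial.C (gP a) := by
  rw [torusF, map_sub, map_add, map_pow (Phi c s), map_pow (Phi c s), Phi_X2, map_one,
    Phi_S hcs a, gP_eq]
  simp only [map_sub, map_one, map_pow]
  ring

/-- the polynomial `u₄ = 4(t²-a²)` -/
noncomputable def u4 (a : ℝ) : Polynomial ℝ := 4 * (Polynomial.X ^ 2 - Polynomial.C (a ^ 2))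

lemma Phi_factor :
    Phi c s (4 * (X 0 ^ 2 + X 1 ^ 2 - C (a ^ 2))) = Polynomial.C (u4 a) := by
  rw [map_mul, Phi_S hcs a, u4, map_mul, map_ofNat, map_ofNat]

end PhiImages

lemma u4_ne_zero (a : ℝ) : u4 a ≠ 0 := by
  intro h
  have : (u4 a).coeff 2 = 4 := by
    simp only [u4, Polynomial.coeff_ofNat_mul, Polynomial.coeff_sub, Polynomial.coeff_X_pow,
      Polynomial.coeff_C]
    norm_num
  rw [h] at this; simp at this

lemma u4_natDegree (a : ℝ) : (u4 a).natDegree = 2 := by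
  unfold u4
  compute_degree!

lemma u4_natTrailingDegree {a : ℝ} (ha : 1 < a) : (u4 a).natTrailingDegree = 0 := by
  refine Polynomial.natTrailingDegree_eq_zero.mpr (Or.inr ?_)
  have : (u4 a).coeff 0 = -(4 * a ^ 2) := by
    simp only [u4, Polynomial.coeff_ofNat_mul, Polynomial.coeff_sub, Polynomial.coeff_X_pow,
      Polynomial.coeff_C]
    norm_num
  rw [this]
  intro h'
  nlinarith


section Bridge

variable (a : ℝ) {c s : ℝ} {H : MvPolynomial (Fin 3) ℝ} {d : ℕ}

lemma Je_phi_eq (hH : H.IsHomogeneous d) (rr : ℕ → ℝ)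
    (hrr : ∀ k, (Phi c s H).coeff k = Polynomial.C (rr k) * Polynomial.X ^ (d - k))
    (M : ℕ) (hM : d/2 + 1 ≤ M) :
    Je a M (Phi c s H) = vsum a d (fun i => rr (2*i)) := by
  rw [Je, vsum, ← Finset.sum_subset (Finset.range_subset_range.mpr hM) ?hz]
  case hz =>
    intro i _ hi
    rw [Finset.mem_range] at hi
    rw [phi_coeff_zero c s hH (k := 2*i) (by omega), mul_zero]
  refine Finset.sum_congr rfl fun i _ => ?_
  rw [hrr (2*i), trm]
  ring

lemma Jo_phi_eq (hH : H.IsHomogeneous d) (rr : ℕ → ℝ)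
    (hrr : ∀ k, (Phi c s H).coeff k = Polynomial.C (rr k) * Polynomial.X ^ (d - k))
    (M : ℕ) (hM : (d-1)/2 + 1 ≤ M) :
    Jo a M (Phi c s H) = vsum a (d-1) (fun i => rr (2*i+1)) := by
  rw [Jo, vsum, ← Finset.sum_subset (Finset.range_subset_range.mpr hM) ?hz]
  case hz =>
    intro i _ hi
    rw [Finset.mem_range] at hi
    rw [phi_coeff_zero c s hH (k := 2*i+1) (by omega), mul_zero]
  refine Finset.sum_congr rfl fun i _ => ?_
  rw [hrr (2*i+1), trm, show d - (2*i+1) = (d-1) - 2*i by omega]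
  ring

end Bridge

lemma phiR_zero (a c s : ℝ) (ha : 1 < a) (hcs : c ^ 2 + s ^ 2 = 1) {n m : ℕ}
    (hn : 1 ≤ n) (hm : m ≤ n) {P Q R : MvPolynomial (Fin 3) ℝ}
    (hP : P.IsHomogeneous n) (hQ : Q.IsHomogeneous n) (hR : R.IsHomogeneous m)
    (hvf : IsVFOnTorus a P Q R) : Phi c s R = 0 := by
  obtain ⟨K, hK⟩ := hvf
  have hA : (X 0 * P + X 1 * Q).IsHomogeneous (n+1) := by
    have h1 := ((isHomogeneous_X ℝ 0).mul hP).add ((isHomogeneous_X ℝ 1).mul hQ)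
    rwa [Nat.add_comm] at h1
  have E0 : (4 * (X 0 ^ 2 + X 1 ^ 2 - C (a ^ 2))) * (X 0 * P + X 1 * Q) + (2 * X 2) * R
      = K * torusF a := by rw [← chiF]; exact hK
  have ET : Polynomial.C (u4 a) * Phi c s (X 0 * P + X 1 * Q)
      + Polynomial.C 2 * (Polynomial.X * Phi c s R)
      = Phi c s K * (Polynomial.X ^ 2 - Polynomial.C (gP a)) := by
    have h := congrArg (Phi c s) E0
    simp only [map_add, map_mul, map_ofNat] at h
    rw [Phi_S hcs a, Phi_torusF hcs a, Phi_X0, Phi_X1, Phi_X2] at h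
    simp only [map_add, map_mul, map_ofNat, u4, Phi_X0, Phi_X1]
    simp only [map_mul] at h
    linear_combination h
  set M := (Phi c s K).natDegree + (Phi c s R).natDegree + n + m + 5 with hMdef
  have hRb : (Phi c s R).coeff (2*M - 1) = 0 :=
    Polynomial.coeff_eq_zero_of_natDegree_lt (by omega)
  have hKb1 : (Phi c s K).coeff (2*M - 1) = 0 :=
    Polynomial.coeff_eq_zero_of_natDegree_lt (by omega)
  have hKb2 : (Phi c s K).coeff (2*M - 2) = 0 :=
    Polynomial.coeff_eq_zero_of_natDegree_lt (by omega)
  have E1 := congrArg (Je a M) ET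
  rw [Je_add, Je_C_mul, Je_C_mul, Je_X_mul a M hRb, Je_mul_torus a M hKb2] at E1
  have E2 := congrArg (Jo a M) ET
  rw [Jo_add, Jo_C_mul, Jo_C_mul, Jo_X_mul, Jo_mul_torus a M hKb1] at E2
  choose rr hrr using fun k => phi_coeff_struct c s hR k
  choose aa haa using fun k => phi_coeff_struct c s hA k
  rw [Je_phi_eq a hR rr hrr M (by omega), Jo_phi_eq a hA aa haa M (by omega)] at E2
  rw [Je_phi_eq a hA aa haa M (by omega), Jo_phi_eq a hR rr hrr M (by omega)] at E1
  rw [show n + 1 - 1 = n by omega] at E2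
  have hC2ne : (Polynomial.C (-2:ℝ)) ≠ 0 := Polynomial.C_ne_zero.mpr (by norm_num)
  -- even part of R vanishes
  have hpE : vsum a m (fun i => rr (2*i)) = 0 := by
    by_contra hp
    have hw : vsum a n (fun i => aa (2*i+1)) ≠ 0 := by
      intro h0
      rw [h0, mul_zero, zero_add] at E2
      rcases mul_eq_zero.mp E2 with h' | h'
      · exact two_ne_zero h'
      · exact hp h'
    obtain ⟨J, hJle, hdeg, htrail⟩ := vsum_spec ha hp
    obtain ⟨J2, hJ2le, hdeg2, htrail2⟩ := vsum_spec ha hw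
    have heq : u4 a * vsum a n (fun i => aa (2*i+1))
        = Polynomial.C (-2) * vsum a m (fun i => rr (2*i)) := by
      rw [map_neg, map_ofNat]
      linear_combination E2
    have h1 := congrArg Polynomial.natDegree heq
    rw [Polynomial.natDegree_mul (u4_ne_zero a) hw, Polynomial.natDegree_mul hC2ne hp,
      u4_natDegree, hdeg, hdeg2, Polynomial.natDegree_C] at h1
    have h2 := congrArg Polynomial.natTrailingDegree heq
    rw [Polynomial.natTrailingDegree_mul (u4_ne_zero a) hw,
      Polynomial.natTrailingDegree_mul hC2ne hp, u4_natTrailingDegree ha, htrail, htrail2,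
      Polynomial.natTrailingDegree_C] at h2
    omega
  -- odd part of R vanishes
  have hpO : vsum a (m-1) (fun i => rr (2*i+1)) = 0 := by
    by_contra hp
    have hgq : gP a * vsum a (m-1) (fun i => rr (2*i+1)) ≠ 0 := mul_ne_zero (gP_ne_zero a) hp
    have hw : vsum a (n+1) (fun i => aa (2*i)) ≠ 0 := by
      intro h0
      rw [h0, mul_zero, zero_add] at E1
      rcases mul_eq_zero.mp E1 with h' | h'
      · exact two_ne_zero h'
      · exact hgq h'
    obtain ⟨J, hJle, hdeg, htrail⟩ := vsum_spec ha hp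
    obtain ⟨J2, hJ2le, hdeg2, htrail2⟩ := vsum_spec ha hw
    have heq : u4 a * vsum a (n+1) (fun i => aa (2*i))
        = Polynomial.C (-2) * (gP a * vsum a (m-1) (fun i => rr (2*i+1))) := by
      rw [map_neg, map_ofNat]
      linear_combination E1
    have h1 := congrArg Polynomial.natDegree heq
    rw [Polynomial.natDegree_mul (u4_ne_zero a) hw, Polynomial.natDegree_mul hC2ne hgq,
      Polynomial.natDegree_mul (gP_ne_zero a) hp,
      u4_natDegree, hdeg, hdeg2, Polynomial.natDegree_C, gP_natDegree] at h1
    have h2 := congrArg Polynomial.natTrailingDegree heq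
    rw [Polynomial.natTrailingDegree_mul (u4_ne_zero a) hw,
      Polynomial.natTrailingDegree_mul hC2ne hgq,
      Polynomial.natTrailingDegree_mul (gP_ne_zero a) hp,
      u4_natTrailingDegree ha, htrail, htrail2,
      Polynomial.natTrailingDegree_C, gP_natTrailingDegree ha] at h2
    omega
  have hre := vsum_eq_zero_iff ha hpE
  have hro := vsum_eq_zero_iff ha hpO
  apply Polynomial.ext
  intro k
  rw [Polynomial.coeff_zero]
  by_cases hk : k ≤ m
  · rcases Nat.even_or_odd k with ⟨i, hi⟩ | ⟨i, hi⟩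
    · rw [show k = 2*i from by omega, hrr (2*i), hre i (by omega), map_zero, zero_mul]
    · rw [show k = 2*i+1 from by omega, hrr (2*i+1), hro i (by omega), map_zero, zero_mul]
  · exact phi_coeff_zero c s hR (by omega)

lemma eval_phi (c s r0 z0 : ℝ) (H : MvPolynomial (Fin 3) ℝ) :
    Polynomial.eval₂ (Polynomial.evalRingHom r0) z0 (Phi c s H)
      = MvPolynomial.eval (fun i : Fin 3 => if i = 0 then c * r0 else if i = 1 then s * r0 else z0)
          H := by
  induction H using MvPolynomial.induction_on with
  | C r => rw [Phi_C]; simp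
  | add p q hp hq => simp only [map_add, Polynomial.eval₂_add, hp, hq]
  | mul_X p i hp =>
    rw [map_mul, Polynomial.eval₂_mul, hp, map_mul]
    congr 1
    fin_cases i <;> simp [Phi]

end TorusProof

theorem stmt_0 (a : ℝ) (ha : 1 < a) (n m : ℕ) (hn : 1 ≤ n)
    (P Q R : MvPolynomial (Fin 3) ℝ)
    (hP : P.IsHomogeneous n) (hQ : Q.IsHomogeneous n)
    (hm : m ≤ n) (hR : R.IsHomogeneous m)
    (hvf : IsVFOnTorus a P Q R) : R = 0 := by
  have key : ∀ c s : ℝ, c ^ 2 + s ^ 2 = 1 → TorusProof.Phi c s R = 0 :=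
    fun c s hcs => TorusProof.phiR_zero a c s ha hcs hn hm hP hQ hR hvf
  apply MvPolynomial.funext (q := 0)
  intro x
  rw [map_zero]
  by_cases h0 : x 0 = 0 ∧ x 1 = 0
  · have he := TorusProof.eval_phi 1 0 0 (x 2) R
    rw [key 1 0 (by norm_num), Polynomial.eval₂_zero] at he
    have hfun : (fun i : Fin 3 => if i = 0 then (1:ℝ) * 0 else if i = 1 then (0:ℝ) * 0 else x 2)
        = x := by
      funext i
      fin_cases i <;> simp [h0.1, h0.2]
    rw [hfun] at he
    exact he.symm
  · have hpos : 0 < (x 0) ^ 2 + (x 1) ^ 2 := by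
      rcases not_and_or.mp h0 with h | h
      · rcases Ne.lt_or_gt h with h' | h' <;> nlinarith [sq_nonneg (x 1)]
      · rcases Ne.lt_or_gt h with h' | h' <;> nlinarith [sq_nonneg (x 0)]
    set r0 := Real.sqrt ((x 0) ^ 2 + (x 1) ^ 2) with hr0
    have hr0pos : 0 < r0 := Real.sqrt_pos.mpr hpos
    have hr0sq : r0 ^ 2 = (x 0) ^ 2 + (x 1) ^ 2 := Real.sq_sqrt hpos.le
    have hcs : (x 0 / r0) ^ 2 + (x 1 / r0) ^ 2 = 1 := by
      field_simp
      linarith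
    have he := TorusProof.eval_phi (x 0 / r0) (x 1 / r0) r0 (x 2) R
    rw [key _ _ hcs, Polynomial.eval₂_zero] at he
    have hfun : (fun i : Fin 3 =>
        if i = 0 then x 0 / r0 * r0 else if i = 1 then x 1 / r0 * r0 else x 2) = x := by
      funext i
      fin_cases i <;> simp [div_mul_cancel₀, hr0pos.ne']
    rw [hfun] at he
    exact he.symm
end

section
/- Let P, Q, R ∈ ℝ[x,y,z] with deg P, deg Q, deg R ≤ 3. Then χ = (P,Q,R) is a vector field on 𝕋² if and only if there exist f, K' ∈ ℝ[x,y,z] with deg f ≤ 2 and deg K' ≤ 1, and β, γ ∈ ℝ, such that, writing K = K'·z: P = (1/4)Kx + f·y + β·z, Q = (1/4)Ky − f·x + γ·z, and R = (1/2)K'·(−a²(x²+y²) + z² + a⁴ − 1) − 2(βx + γy)(x²+y²−a²). Moreover, in this case χ(F) = K·F, i.e., K = K'z is the cofactor of χ for 𝕋². -/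
open MvPolynomial

lemma vf_torus (a : ℝ) (P Q R : MvPolynomial (Fin 3) ℝ) :
    vf P Q R (torusF a) =
      4 * (X 0 ^ 2 + X 1 ^ 2 - C (a ^ 2)) * (P * X 0 + Q * X 1) + 2 * R * X 2 := by
  simp only [vf, torusF, map_add, map_sub, pderiv_pow, pderiv_C, pderiv_one, pderiv_X,
    map_one]
  simp [pderiv_X_self, pderiv_X_of_ne]
  ring


noncomputable def zeroAt (i : Fin 3) : MvPolynomial (Fin 3) ℝ →ₐ[ℝ] MvPolynomial (Fin 3) ℝ :=
  aeval (fun j => if j = i then 0 else X j)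

lemma zeroAt_X_self (i : Fin 3) : zeroAt i (X i) = 0 := by simp [zeroAt]
lemma zeroAt_X_ne (i j : Fin 3) (h : j ≠ i) : zeroAt i (X j) = X j := by simp [zeroAt, h]

lemma zeroAt_monomial (i : Fin 3) (d : Fin 3 →₀ ℕ) (r : ℝ) :
    zeroAt i (monomial d r) = if d i = 0 then monomial d r else 0 := by
  rw [zeroAt, aeval_monomial]
  by_cases h : d i = 0
  · rw [if_pos h]
    have hi : i ∉ d.support := by simp [Finsupp.mem_support_iff, h]
    rw [monomial_eq]
    congr 1
    rw [Finsupp.prod, Finsupp.prod]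
    refine Finset.prod_congr rfl fun j hj => ?_
    have : j ≠ i := fun hji => hi (hji ▸ hj)
    simp [this]
  · rw [if_neg h]
    have hi : i ∈ d.support := Finsupp.mem_support_iff.2 h
    rw [Finsupp.prod, Finset.prod_eq_zero hi (by simp [zero_pow h])]
    ring

lemma coeff_zeroAt (i : Fin 3) (p : MvPolynomial (Fin 3) ℝ) (d : Fin 3 →₀ ℕ) :
    coeff d (zeroAt i p) = if d i = 0 then coeff d p else 0 := by
  conv_lhs => rw [p.as_sum, map_sum]
  rw [coeff_sum]
  simp only [zeroAt_monomial]
  by_cases h : d i = 0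
  · rw [if_pos h]
    by_cases hd : d ∈ p.support
    · rw [Finset.sum_eq_single d]
      · simp [h, coeff_monomial]
      · intro e he hne
        by_cases hei : e i = 0
        · simp only [hei, if_true, coeff_monomial]
          rw [if_neg hne]
        · simp [hei]
      · intro hnd; exact absurd hd hnd
    · rw [Finset.sum_eq_zero, eq_comm]
      · exact notMem_support_iff.1 hd
      · intro e he
        have hne : e ≠ d := fun hh => hd (hh ▸ he)
        by_cases hei : e i = 0
        · simp [hei, coeff_monomial, hne]
        · simp [hei]
  · rw [if_neg h]
    refine Finset.sum_eq_zero fun e he => ?_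
    by_cases hei : e i = 0
    · have hne : e ≠ d := fun hh => h (hh ▸ hei)
      simp [hei, coeff_monomial, hne]
    · simp [hei]

lemma totalDegree_zeroAt_le (i : Fin 3) (p : MvPolynomial (Fin 3) ℝ) :
    (zeroAt i p).totalDegree ≤ p.totalDegree := by
  apply Finset.sup_mono
  intro d hd
  rw [mem_support_iff] at hd ⊢
  rw [coeff_zeroAt] at hd
  by_cases h : d i = 0
  · rwa [if_pos h] at hd
  · rw [if_neg h] at hd; exact absurd rfl hd

lemma X_dvd_sub_zeroAt (i : Fin 3) (p : MvPolynomial (Fin 3) ℝ) :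
    X i ∣ p - zeroAt i p := by
  induction p using MvPolynomial.induction_on with
  | C c => simp [zeroAt]
  | add p q hp hq =>
      have : p + q - zeroAt i (p + q) = (p - zeroAt i p) + (q - zeroAt i q) := by
        rw [map_add]; ring
      rw [this]; exact dvd_add hp hq
  | mul_X p j hp =>
      rw [map_mul]
      by_cases h : j = i
      · subst h; rw [zeroAt_X_self, mul_zero, sub_zero]; exact Dvd.intro_left p rfl
      · rw [zeroAt_X_ne i j h]
        have : p * X j - zeroAt i p * X j = (p - zeroAt i p) * X j := by ring
        rw [this]; exact Dvd.dvd.mul_right hp _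


lemma homogeneousComponent_monomial (k : ℕ) (d : Fin 3 →₀ ℕ) (r : ℝ) :
    homogeneousComponent k (monomial d r)
      = if d.degree = k then monomial d r else 0 := by
  ext e
  rw [coeff_homogeneousComponent]
  by_cases h : d = e
  · subst h
    by_cases hk : d.degree = k <;> simp [hk, coeff_monomial]
  · have h1 : coeff e (monomial d r) = 0 := by rw [coeff_monomial, if_neg h]
    by_cases hk : d.degree = k <;> by_cases he : e.degree = k <;>
      simp_all [Finsupp.degree, Finsupp.sum, coeff_monomial, h]

lemma coeff_psi (c : Fin 3 → ℝ) (k : ℕ) (p : MvPolynomial (Fin 3) ℝ) :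
    (aeval (fun i => Polynomial.C (c i) * Polynomial.X) p).coeff k
      = eval c (homogeneousComponent k p) := by
  induction p using MvPolynomial.induction_on' with
  | monomial d r =>
      rw [aeval_monomial, homogeneousComponent_monomial]
      have hprod : (d.prod fun i e => (Polynomial.C (c i) * Polynomial.X) ^ e)
          = Polynomial.C (d.prod fun i e => (c i) ^ e) * Polynomial.X ^ (d.degree) := by
        rw [Finsupp.prod, Finsupp.prod, Finsupp.degree_apply, ← Finset.prod_pow_eq_pow_sum]
        rw [map_prod, ← Finset.prod_mul_distrib]
        exact Finset.prod_congr rfl fun j _ => by rw [mul_pow, Polynomial.C_pow]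
      rw [hprod]
      have halg : (algebraMap ℝ (Polynomial ℝ)) r = Polynomial.C r := rfl
      rw [halg, ← mul_assoc, ← Polynomial.C_mul, Polynomial.coeff_C_mul,
        Polynomial.coeff_X_pow]
      by_cases hk : d.degree = k
      · rw [if_pos hk, if_pos hk.symm, eval_monomial]
        simp
      · rw [if_neg hk, if_neg (fun h => hk h.symm)]
        simp
  | add p q hp hq =>
      rw [map_add, map_add, Polynomial.coeff_add, map_add, hp, hq]

lemma natDegree_psi_le (c : Fin 3 → ℝ) (p : MvPolynomial (Fin 3) ℝ) :
    (aeval (fun i => Polynomial.C (c i) * Polynomial.X) p).natDegree ≤ p.totalDegree := by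
  apply Polynomial.natDegree_le_iff_coeff_eq_zero.2
  intro k hk
  rw [coeff_psi, homogeneousComponent_eq_zero _ p hk, map_zero]

lemma homogeneousComponent_totalDegree_ne_zero {p : MvPolynomial (Fin 3) ℝ} (hp : p ≠ 0) :
    homogeneousComponent p.totalDegree p ≠ 0 := by
  obtain ⟨d, hd, hdeg⟩ : ∃ d ∈ p.support, p.totalDegree = (d.sum fun _ e => e) :=
    Finset.exists_mem_eq_sup _ (MvPolynomial.support_nonempty.2 hp) _
  intro h
  have := coeff_homogeneousComponent (φ := p) (n := p.totalDegree) d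
  rw [h, coeff_zero] at this
  have hdd : d.degree = p.totalDegree := by
    rw [Finsupp.degree, hdeg]; rfl
  rw [if_pos hdd] at this
  exact mem_support_iff.1 hd this.symm

lemma totalDegree_mul_eq {p q : MvPolynomial (Fin 3) ℝ} (hp : p ≠ 0) (hq : q ≠ 0) :
    (p * q).totalDegree = p.totalDegree + q.totalDegree := by
  refine le_antisymm (totalDegree_mul p q) ?_
  have h1 := homogeneousComponent_totalDegree_ne_zero hp
  have h2 := homogeneousComponent_totalDegree_ne_zero hq
  have hprod : homogeneousComponent p.totalDegree p * homogeneousComponent q.totalDegree q ≠ 0 :=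
    mul_ne_zero h1 h2
  obtain ⟨c, hc⟩ : ∃ c : Fin 3 → ℝ, eval c (homogeneousComponent p.totalDegree p
      * homogeneousComponent q.totalDegree q) ≠ 0 := by
    by_contra h
    push_neg at h
    exact hprod (MvPolynomial.funext fun x => by rw [h x, map_zero])
  rw [map_mul] at hc
  set ψ := aeval (R := ℝ) (fun i => Polynomial.C (c i) * Polynomial.X)
  have hcp : (ψ p).coeff p.totalDegree ≠ 0 := by
    rw [coeff_psi]; exact fun h => hc (by rw [h, zero_mul])
  have hcq : (ψ q).coeff q.totalDegree ≠ 0 := by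
    rw [coeff_psi]; exact fun h => hc (by rw [h, mul_zero])
  have hdp : (ψ p).natDegree = p.totalDegree :=
    le_antisymm (natDegree_psi_le c p) (Polynomial.le_natDegree_of_ne_zero hcp)
  have hdq : (ψ q).natDegree = q.totalDegree :=
    le_antisymm (natDegree_psi_le c q) (Polynomial.le_natDegree_of_ne_zero hcq)
  have hψp : ψ p ≠ 0 := fun h => hcp (by rw [h, Polynomial.coeff_zero])
  have hψq : ψ q ≠ 0 := fun h => hcq (by rw [h, Polynomial.coeff_zero])
  calc p.totalDegree + q.totalDegree = (ψ p).natDegree + (ψ q).natDegree := by rw [hdp, hdq]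
    _ = (ψ p * ψ q).natDegree := (Polynomial.natDegree_mul hψp hψq).symm
    _ = (ψ (p * q)).natDegree := by rw [map_mul]
    _ ≤ (p * q).totalDegree := natDegree_psi_le c _


lemma finsupp_cases_of_deg_le_one {d : Fin 3 →₀ ℕ} (h : d 0 + d 1 + d 2 ≤ 1) :
    d = 0 ∨ d = Finsupp.single 0 1 ∨ d = Finsupp.single 1 1 ∨ d = Finsupp.single 2 1 := by
  have hcase : (d 0 = 0 ∧ d 1 = 0 ∧ d 2 = 0) ∨ (d 0 = 1 ∧ d 1 = 0 ∧ d 2 = 0)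
      ∨ (d 0 = 0 ∧ d 1 = 1 ∧ d 2 = 0) ∨ (d 0 = 0 ∧ d 1 = 0 ∧ d 2 = 1) := by omega
  rcases hcase with ⟨h0, h1, h2⟩ | ⟨h0, h1, h2⟩ | ⟨h0, h1, h2⟩ | ⟨h0, h1, h2⟩
  · left; ext j; fin_cases j <;> simpa
  · right; left; ext j; fin_cases j <;> simp [Finsupp.single_apply, *]
  · right; right; left; ext j; fin_cases j <;> simp [Finsupp.single_apply, *]
  · right; right; right; ext j; fin_cases j <;> simp [Finsupp.single_apply, *]

lemma finsupp_sum_eq (d : Fin 3 →₀ ℕ) : (d.sum fun _ e => e) = d 0 + d 1 + d 2 := by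
  rw [Finsupp.sum_fintype _ _ (fun _ => rfl), Fin.sum_univ_three]

lemma eq_linear_of_totalDegree_le_one {N : MvPolynomial (Fin 3) ℝ} (h : N.totalDegree ≤ 1) :
    N = C (coeff 0 N) + C (coeff (Finsupp.single 0 1) N) * X 0
      + C (coeff (Finsupp.single 1 1) N) * X 1 + C (coeff (Finsupp.single 2 1) N) * X 2 := by
  have e01 : Finsupp.single (0 : Fin 3) 1 ≠ Finsupp.single 1 1 := by
    intro hh; simpa using DFunLike.congr_fun hh 0
  have e02 : Finsupp.single (0 : Fin 3) 1 ≠ Finsupp.single 2 1 := by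
    intro hh; simpa using DFunLike.congr_fun hh 0
  have e12 : Finsupp.single (1 : Fin 3) 1 ≠ Finsupp.single 2 1 := by
    intro hh; simpa using DFunLike.congr_fun hh 1
  have n0 : ∀ i : Fin 3, Finsupp.single i 1 ≠ (0 : Fin 3 →₀ ℕ) := by
    intro i hh; simpa using DFunLike.congr_fun hh i
  ext d
  rw [coeff_add, coeff_add, coeff_add, coeff_C_mul, coeff_C_mul, coeff_C_mul,
    coeff_X', coeff_X', coeff_X', coeff_C]
  have hcases : d = 0 ∨ d = Finsupp.single 0 1 ∨ d = Finsupp.single 1 1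
      ∨ d = Finsupp.single 2 1 ∨ coeff d N = 0 := by
    by_cases hd : coeff d N = 0
    · right; right; right; right; exact hd
    · have := le_totalDegree (mem_support_iff.2 hd) |>.trans h
      rw [finsupp_sum_eq] at this
      rcases finsupp_cases_of_deg_le_one this with h' | h' | h' | h' <;> tauto
  rcases hcases with h' | h' | h' | h' | h'
  · subst h'
    rw [if_pos rfl, if_neg (n0 0), if_neg (n0 1), if_neg (n0 2)]; ring
  · subst h'
    rw [if_neg (fun hh => n0 0 hh.symm), if_pos rfl, if_neg (Ne.symm e01),
      if_neg (Ne.symm e02)]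
    ring
  · subst h'
    rw [if_neg (fun hh => n0 1 hh.symm), if_neg e01, if_pos rfl, if_neg (Ne.symm e12)]
    ring
  · subst h'
    rw [if_neg (fun hh => n0 2 hh.symm), if_neg e02, if_neg e12, if_pos rfl]
    ring
  · rw [h']
    by_cases h0 : (0 : Fin 3 →₀ ℕ) = d
    · rw [← h0] at h'; rw [if_pos h0]
      rw [← h0, if_neg (n0 0), if_neg (n0 1), if_neg (n0 2), h']; ring
    · rw [if_neg h0]
      by_cases k0 : Finsupp.single (0 : Fin 3) 1 = d
      · rw [← k0] at h'
        rw [← k0, if_pos rfl, if_neg (Ne.symm e01), if_neg (Ne.symm e02), h']; ring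
      · rw [if_neg k0]
        by_cases k1 : Finsupp.single (1 : Fin 3) 1 = d
        · rw [← k1] at h'
          rw [← k1, if_pos rfl, if_neg (Ne.symm e12), h']; ring
        · rw [if_neg k1]
          by_cases k2 : Finsupp.single (2 : Fin 3) 1 = d
          · rw [← k2] at h'; rw [← k2, if_pos rfl, h']; ring
          · rw [if_neg k2]; ring

lemma finsupp_sum_eq' (d : Fin 3 →₀ ℕ) : (d.sum fun _ e => e) = d 0 + d 1 + d 2 := by
  rw [Finsupp.sum_fintype _ _ (fun _ => rfl), Fin.sum_univ_three]

lemma sq_sum_totalDegree : (X 0 ^ 2 + X 1 ^ 2 : MvPolynomial (Fin 3) ℝ).totalDegree = 2 := by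
  refine le_antisymm ?_ ?_
  · refine (totalDegree_add _ _).trans ?_
    simp [totalDegree_X_pow]
  · have hc : coeff (Finsupp.single 0 2) (X 0 ^ 2 + X 1 ^ 2 : MvPolynomial (Fin 3) ℝ) = 1 := by
      rw [coeff_add, coeff_X_pow, coeff_X_pow, if_pos rfl,
        if_neg (fun hh => by simpa using DFunLike.congr_fun hh 0)]
      norm_num
    have := le_totalDegree (p := (X 0 ^ 2 + X 1 ^ 2 : MvPolynomial (Fin 3) ℝ))
      (mem_support_iff.2 (by rw [hc]; norm_num))
    rwa [finsupp_sum_eq', Finsupp.single_apply, Finsupp.single_apply, Finsupp.single_apply]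
      at this

lemma A_totalDegree (a : ℝ) :
    (X 0 ^ 2 + X 1 ^ 2 - C (a ^ 2) : MvPolynomial (Fin 3) ℝ).totalDegree = 2 := by
  have : (X 0 ^ 2 + X 1 ^ 2 - C (a ^ 2) : MvPolynomial (Fin 3) ℝ)
      = (X 0 ^ 2 + X 1 ^ 2) + (- C (a ^ 2)) := by ring
  rw [this, totalDegree_add_eq_left_of_totalDegree_lt, sq_sum_totalDegree]
  rw [sq_sum_totalDegree, totalDegree_neg, totalDegree_C]
  norm_num

lemma A_ne_zero (a : ℝ) : (X 0 ^ 2 + X 1 ^ 2 - C (a ^ 2) : MvPolynomial (Fin 3) ℝ) ≠ 0 := by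
  intro h
  have := A_totalDegree a
  rw [h, totalDegree_zero] at this
  norm_num at this

lemma F_totalDegree (a : ℝ) : (torusF a).totalDegree = 4 := by
  have hA := A_ne_zero a
  have h1 : ((X 0 ^ 2 + X 1 ^ 2 - C (a ^ 2) : MvPolynomial (Fin 3) ℝ) ^ 2).totalDegree = 4 := by
    rw [sq, totalDegree_mul_eq hA hA, A_totalDegree]
  have : torusF a = (X 0 ^ 2 + X 1 ^ 2 - C (a ^ 2)) ^ 2 + (X 2 ^ 2 - 1) := by
    rw [torusF]; ring
  rw [this, totalDegree_add_eq_left_of_totalDegree_lt, h1]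
  rw [h1]
  refine lt_of_le_of_lt ((totalDegree_sub _ _).trans ?_) (by norm_num : (2:ℕ) < 4)
  simp [totalDegree_X_pow]

lemma F_ne_zero (a : ℝ) : torusF a ≠ 0 := by
  intro h
  have := F_totalDegree a
  rw [h, totalDegree_zero] at this
  norm_num at this

lemma C4_eq : (4 : MvPolynomial (Fin 3) ℝ) * C (1/4 : ℝ) = 1 := by
  rw [show (4 : MvPolynomial (Fin 3) ℝ) = C (4 : ℝ) from (map_ofNat C 4).symm, ← C_mul]
  norm_num

lemma C2_eq : (2 : MvPolynomial (Fin 3) ℝ) * C (1/2 : ℝ) = 1 := by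
  rw [show (2 : MvPolynomial (Fin 3) ℝ) = C (2 : ℝ) from (map_ofNat C 2).symm, ← C_mul]
  norm_num

lemma easy_dir (a β γ : ℝ) (f K' P Q R : MvPolynomial (Fin 3) ℝ)
    (hP : P = C (1/4 : ℝ) * (K' * X 2) * X 0 + f * X 1 + C β * X 2)
    (hQ : Q = C (1/4 : ℝ) * (K' * X 2) * X 1 - f * X 0 + C γ * X 2)
    (hR : R = C (1/2 : ℝ) * K' * (- C (a ^ 2) * (X 0 ^ 2 + X 1 ^ 2) + X 2 ^ 2 + C (a ^ 4 - 1))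
            - 2 * (C β * X 0 + C γ * X 1) * (X 0 ^ 2 + X 1 ^ 2 - C (a ^ 2))) :
    vf P Q R (torusF a) = (K' * X 2) * torusF a := by
  have ha4 : (C (a ^ 4 - 1) : MvPolynomial (Fin 3) ℝ) = C (a ^ 2) ^ 2 - 1 := by
    rw [show a ^ 4 - 1 = (a ^ 2) ^ 2 - 1 by ring, map_sub, map_pow, map_one]
  rw [vf_torus, hP, hQ, hR, ha4, torusF]
  linear_combination (exp := 1)
    ((X 0 ^ 2 + X 1 ^ 2 - C (a ^ 2)) * K' * X 2 * (X 0 ^ 2 + X 1 ^ 2)) * C4_eq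
    + (X 2 * K' * (- C (a ^ 2) * (X 0 ^ 2 + X 1 ^ 2) + X 2 ^ 2 + (C (a ^ 2) ^ 2 - 1))) * C2_eq

lemma zeroAt_C (i : Fin 3) (r : ℝ) : zeroAt i (C r) = C r := by
  simp [zeroAt]

lemma eq_C_of_totalDegree_eq_zero {m : MvPolynomial (Fin 3) ℝ} (h : m.totalDegree = 0) :
    m = C (coeff 0 m) := by
  have hz : ∀ i : Fin 3, coeff (Finsupp.single i 1) m = 0 := by
    intro i
    by_contra hc
    have := le_totalDegree (mem_support_iff.2 hc)
    rw [finsupp_sum_eq', h] at this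
    fin_cases i <;> simp [Finsupp.single_apply] at this
  have := eq_linear_of_totalDegree_le_one (N := m) (by omega)
  rw [hz 0, hz 1, hz 2] at this
  simpa using this

lemma mvFourNeZero : (4 : MvPolynomial (Fin 3) ℝ) ≠ 0 := by
  rw [show (4 : MvPolynomial (Fin 3) ℝ) = C (4 : ℝ) from (map_ofNat C 4).symm]
  simp [C_eq_zero]

lemma mvTwoNeZero : (2 : MvPolynomial (Fin 3) ℝ) ≠ 0 := by
  rw [show (2 : MvPolynomial (Fin 3) ℝ) = C (2 : ℝ) from (map_ofNat C 2).symm]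
  simp [C_eq_zero]

lemma hard_dir (a : ℝ) (ha : 1 < a) (P Q R K : MvPolynomial (Fin 3) ℝ)
    (hP : P.totalDegree ≤ 3) (hQ : Q.totalDegree ≤ 3) (hR : R.totalDegree ≤ 3)
    (heq : vf P Q R (torusF a) = K * torusF a) :
    ∃ (f K' : MvPolynomial (Fin 3) ℝ) (β γ : ℝ),
        f.totalDegree ≤ 2 ∧ K'.totalDegree ≤ 1 ∧
        P = C (1/4 : ℝ) * (K' * X 2) * X 0 + f * X 1 + C β * X 2 ∧
        Q = C (1/4 : ℝ) * (K' * X 2) * X 1 - f * X 0 + C γ * X 2 ∧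
        R = C (1/2 : ℝ) * K' * (- C (a ^ 2) * (X 0 ^ 2 + X 1 ^ 2) + X 2 ^ 2 + C (a ^ 4 - 1))
            - 2 * (C β * X 0 + C γ * X 1) * (X 0 ^ 2 + X 1 ^ 2 - C (a ^ 2)) := by
  rw [vf_torus] at heq
  set A : MvPolynomial (Fin 3) ℝ := X 0 ^ 2 + X 1 ^ 2 - C (a ^ 2) with hAdef
  have hAne : A ≠ 0 := A_ne_zero a
  have hAdeg : A.totalDegree = 2 := A_totalDegree a
  have hFne : torusF a ≠ 0 := F_ne_zero a
  have hFdeg : (torusF a).totalDegree = 4 := F_totalDegree a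
  -- step: degree of K
  have hKdeg : K.totalDegree ≤ 2 := by
    rcases eq_or_ne K 0 with hK0 | hK0
    · rw [hK0, totalDegree_zero]; omega
    · have h1 : (K * torusF a).totalDegree = K.totalDegree + 4 := by
        rw [totalDegree_mul_eq hK0 hFne, hFdeg]
      have h2 : (4 * A * (P * X 0 + Q * X 1) + 2 * R * X 2).totalDegree ≤ 6 := by
        refine (totalDegree_add _ _).trans (max_le ?_ ?_)
        · refine (totalDegree_mul _ _).trans ?_
          have hx : (4 * A : MvPolynomial (Fin 3) ℝ).totalDegree ≤ 2 := by
            refine (totalDegree_mul _ _).trans ?_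
            rw [show (4 : MvPolynomial (Fin 3) ℝ) = C (4:ℝ) from (map_ofNat C 4).symm,
              totalDegree_C, hAdeg]
          have hy : (P * X 0 + Q * X 1).totalDegree ≤ 4 := by
            refine (totalDegree_add _ _).trans (max_le ?_ ?_) <;>
              refine (totalDegree_mul _ _).trans ?_ <;> rw [totalDegree_X] <;> omega
          omega
        · refine (totalDegree_mul _ _).trans ?_
          have : (2 * R : MvPolynomial (Fin 3) ℝ).totalDegree ≤ 3 := by
            refine (totalDegree_mul _ _).trans ?_
            rw [show (2 : MvPolynomial (Fin 3) ℝ) = C (2:ℝ) from (map_ofNat C 2).symm,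
              totalDegree_C]
            omega
          rw [totalDegree_X]
          omega
      rw [← heq] at h1
      omega
  -- step: applying z := 0
  have hσ : 4 * A * (zeroAt 2 P * X 0 + zeroAt 2 Q * X 1) = zeroAt 2 K * (A ^ 2 - 1) := by
    have h := congrArg (zeroAt 2) heq
    rw [hAdef] at h ⊢
    simp only [map_add, map_mul, map_sub, map_pow, map_one, map_ofNat, torusF,
      zeroAt_X_self, zeroAt_X_ne 2 0 (by decide), zeroAt_X_ne 2 1 (by decide),
      zeroAt_C] at h
    rw [show ((C a : MvPolynomial (Fin 3) ℝ) ^ 2) = C (a ^ 2) from (C_pow a 2).symm] at h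
    linear_combination h
  -- step: A divides (zeroAt 2 K)
  have hdvd : A ∣ zeroAt 2 K := by
    have h1 : A ∣ zeroAt 2 K * (A ^ 2 - 1) :=
      ⟨4 * (zeroAt 2 P * X 0 + zeroAt 2 Q * X 1), by linear_combination - hσ⟩
    have h2 : zeroAt 2 K = zeroAt 2 K * A * A - zeroAt 2 K * (A ^ 2 - 1) := by ring
    rw [h2]
    exact dvd_sub (Dvd.intro_left _ rfl) h1
  obtain ⟨m, hm⟩ := hdvd
  -- step: m is a constant c, and c = 0
  have hmC : m = C (coeff 0 m) := by
    apply eq_C_of_totalDegree_eq_zero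
    rcases eq_or_ne m 0 with h0 | h0
    · rw [h0, totalDegree_zero]
    · have h1 : (zeroAt 2 K).totalDegree ≤ 2 := (totalDegree_zeroAt_le 2 K).trans hKdeg
      rw [hm, totalDegree_mul_eq hAne h0, hAdeg] at h1
      omega
  set c : ℝ := coeff 0 m with hc
  have hcancel : 4 * (zeroAt 2 P * X 0 + zeroAt 2 Q * X 1) = C c * (A ^ 2 - 1) := by
    apply mul_left_cancel₀ hAne
    rw [show A * (4 * (zeroAt 2 P * X 0 + zeroAt 2 Q * X 1))
        = 4 * A * (zeroAt 2 P * X 0 + zeroAt 2 Q * X 1) by ring, hσ, hm, hmC]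
    ring
  have hc0 : c = 0 := by
    have hτ := congrArg (zeroAt 0 ∘ zeroAt 1) hcancel
    rw [hAdef] at hτ
    simp only [Function.comp_apply, map_add, map_mul, map_sub, map_pow, map_one, map_ofNat, map_zero,
      zeroAt_X_self, zeroAt_X_ne 1 0 (by decide), zeroAt_X_ne 0 2 (by decide),
      zeroAt_X_ne 1 2 (by decide), zeroAt_C] at hτ
    rw [show ((C a : MvPolynomial (Fin 3) ℝ) ^ 2) = C (a ^ 2) from (C_pow a 2).symm] at hτ
    have h2 : C (c * ((a^2)^2 - 1)) = (0 : MvPolynomial (Fin 3) ℝ) := by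
      rw [map_mul, map_sub, map_pow, map_one]
      linear_combination - hτ
    have h3 : c * ((a^2)^2 - 1) = 0 := by
      have := C_injective (Fin 3) ℝ (h2.trans C_0.symm)
      simpa using this
    have h4 : (a^2)^2 - 1 ≠ 0 := by
      intro hh
      nlinarith [sq_nonneg a, sq_nonneg (a - 1), sq_nonneg (a + 1)]
    exact (mul_eq_zero.1 h3).resolve_right h4
  have hσK : zeroAt 2 K = 0 := by rw [hm, hmC, hc0]; simp
  -- step: K = X 2 * K'
  obtain ⟨K', hK'⟩ : X 2 ∣ K := by
    have := X_dvd_sub_zeroAt 2 K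
    rwa [hσK, sub_zero] at this
  have hK'deg : K'.totalDegree ≤ 1 := by
    rcases eq_or_ne K' 0 with h0 | h0
    · rw [h0, totalDegree_zero]; omega
    · have := hKdeg
      rw [hK', totalDegree_mul_eq (X_ne_zero 2) h0, totalDegree_X] at this
      omega
  -- step:  zeroAt 2 P = X 1 * f₀,  zeroAt 2 Q = - f₀ * X 0
  have hPQ0 : zeroAt 2 P * X 0 + zeroAt 2 Q * X 1 = 0 := by
    have h4 : (4 : MvPolynomial (Fin 3) ℝ) * (zeroAt 2 P * X 0 + zeroAt 2 Q * X 1) = 4 * 0 := by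
      rw [hcancel, hc0, mul_zero]; simp
    exact mul_left_cancel₀ mvFourNeZero h4
  obtain ⟨f₀, hf₀⟩ : X 1 ∣ zeroAt 2 P := by
    have h1 : zeroAt 1 (zeroAt 2 P) * X 0 = 0 := by
      have := congrArg (zeroAt 1) hPQ0
      simpa only [map_add, map_mul, map_zero, zeroAt_X_self,
        zeroAt_X_ne 1 0 (by decide), mul_zero, add_zero] using this
    have h2 : zeroAt 1 (zeroAt 2 P) = 0 :=
      (mul_eq_zero.1 h1).resolve_right (X_ne_zero 0)
    have := X_dvd_sub_zeroAt 1 (zeroAt 2 P)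
    rwa [h2, sub_zero] at this
  have hq₀ : zeroAt 2 Q = - (f₀ * X 0) := by
    have h1 : X 1 * (f₀ * X 0 + zeroAt 2 Q) = 0 := by
      rw [hf₀] at hPQ0; linear_combination hPQ0
    have h2 := (mul_eq_zero.1 h1).resolve_left (X_ne_zero 1)
    linear_combination h2
  -- step: peel off z from P and Q
  obtain ⟨P₁, hP₁⟩ : X 2 ∣ P - zeroAt 2 P := X_dvd_sub_zeroAt 2 P
  obtain ⟨Q₁, hQ₁⟩ : X 2 ∣ Q - zeroAt 2 Q := X_dvd_sub_zeroAt 2 Q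
  -- step: cancel z in the main equation
  have hinner : 4 * A * (P₁ * X 0 + Q₁ * X 1) + 2 * R = K' * torusF a := by
    apply mul_left_cancel₀ (X_ne_zero (R := ℝ) 2)
    have hPx : P = X 1 * f₀ + X 2 * P₁ := by linear_combination hP₁ + hf₀
    have hQx : Q = - (f₀ * X 0) + X 2 * Q₁ := by linear_combination hQ₁ + hq₀
    rw [hK'] at heq
    linear_combination heq - (4 * A * X 0) * hPx - (4 * A * X 1) * hQx
  -- step: the linear polynomial N
  set M : MvPolynomial (Fin 3) ℝ := K' * A - 4 * (P₁ * X 0 + Q₁ * X 1) with hMdef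
  have hAM : A * M = 2 * R - K' * (X 2 ^ 2 - 1) := by
    rw [hMdef]
    have : torusF a = A ^ 2 + X 2 ^ 2 - 1 := by rw [torusF, hAdef]
    rw [this] at hinner
    linear_combination - hinner
  have hMdeg : M.totalDegree ≤ 1 := by
    rcases eq_or_ne M 0 with h0 | h0
    · rw [h0, totalDegree_zero]; omega
    · have h1 : (2 * R - K' * (X 2 ^ 2 - 1)).totalDegree ≤ 3 := by
        refine (totalDegree_sub _ _).trans (max_le ?_ ?_)
        · refine (totalDegree_mul _ _).trans ?_
          rw [show (2 : MvPolynomial (Fin 3) ℝ) = C (2:ℝ) from (map_ofNat C 2).symm,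
            totalDegree_C]
          omega
        · refine (totalDegree_mul _ _).trans ?_
          have : ((X 2 ^ 2 - 1 : MvPolynomial (Fin 3) ℝ)).totalDegree ≤ 2 := by
            refine (totalDegree_sub _ _).trans (max_le ?_ ?_)
            · rw [totalDegree_X_pow]
            · rw [totalDegree_one]; omega
          omega
      rw [← hAM, totalDegree_mul_eq hAne h0, hAdeg] at h1
      omega
  set N : MvPolynomial (Fin 3) ℝ := - C (a ^ 2) * K' - M with hNdef
  have hNdeg : N.totalDegree ≤ 1 := by
    rw [hNdef]
    refine (totalDegree_sub _ _).trans (max_le ?_ hMdeg)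
    have : (- C (a^2) * K' : MvPolynomial (Fin 3) ℝ) = (- C (a^2)) * K' := by ring
    refine (totalDegree_mul _ _).trans ?_
    rw [totalDegree_neg, totalDegree_C]
    omega
  have hNkey : 4 * (P₁ * X 0 + Q₁ * X 1) = K' * (X 0 ^ 2 + X 1 ^ 2) + N := by
    rw [hNdef, hMdef, hAdef]
    ring
  -- step: N = C b * X 0 + C g * X 1
  have hτN : zeroAt 0 (zeroAt 1 N) = 0 := by
    have h := congrArg (zeroAt 0 ∘ zeroAt 1) hNkey
    simp only [Function.comp_apply, map_add, map_mul, map_pow, map_ofNat, map_zero,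
      zeroAt_X_self, zeroAt_X_ne 1 0 (by decide), zeroAt_X_ne 0 2 (by decide),
      zeroAt_X_ne 1 2 (by decide)] at h
    linear_combination - h
  have hN0 : coeff 0 N = 0 := by
    have h1 := coeff_zeroAt 0 (zeroAt 1 N) 0
    have h2 := coeff_zeroAt 1 N 0
    rw [hτN, coeff_zero] at h1
    simp only [Finsupp.coe_zero, Pi.zero_apply, if_true] at h1 h2
    rw [h2] at h1
    exact h1.symm
  have hN2 : coeff (Finsupp.single 2 1) N = 0 := by
    have h1 := coeff_zeroAt 0 (zeroAt 1 N) (Finsupp.single 2 1)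
    have h2 := coeff_zeroAt 1 N (Finsupp.single 2 1)
    rw [hτN, coeff_zero] at h1
    have e0 : (Finsupp.single (2:Fin 3) 1) 0 = 0 := by
      rw [Finsupp.single_apply]; simp
    have e1 : (Finsupp.single (2:Fin 3) 1) 1 = 0 := by
      rw [Finsupp.single_apply]; simp
    rw [e0, if_pos rfl] at h1
    rw [e1, if_pos rfl] at h2
    rw [h2] at h1
    exact h1.symm
  set b : ℝ := coeff (Finsupp.single 0 1) N with hb
  set g : ℝ := coeff (Finsupp.single 1 1) N with hg
  have hNeq : N = C b * X 0 + C g * X 1 := by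
    have := eq_linear_of_totalDegree_le_one hNdeg
    rw [hN0, hN2, ← hb, ← hg] at this
    rw [this]
    simp
  have hCb : (C b : MvPolynomial (Fin 3) ℝ) = 4 * C (b/4) := by
    conv_lhs => rw [show b = 4 * (b/4) by ring]
    rw [C_mul, map_ofNat]
  have hCg : (C g : MvPolynomial (Fin 3) ℝ) = 4 * C (g/4) := by
    conv_lhs => rw [show g = 4 * (g/4) by ring]
    rw [C_mul, map_ofNat]
  have hN18 : 4 * (P₁ * X 0 + Q₁ * X 1)
      = K' * (X 0 ^ 2 + X 1 ^ 2) + 4 * C (b/4) * X 0 + 4 * C (g/4) * X 1 := by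
    rw [hNkey, hNeq, hCb, hCg]; ring
  have hUV : (P₁ - C (1/4:ℝ) * K' * X 0 - C (b/4)) * X 0
      + (Q₁ - C (1/4:ℝ) * K' * X 1 - C (g/4)) * X 1 = 0 := by
    apply mul_left_cancel₀ mvFourNeZero
    rw [mul_zero]
    linear_combination hN18 - (K' * (X 0 ^ 2 + X 1 ^ 2)) * C4_eq
  obtain ⟨f₁, hf₁⟩ : X 1 ∣ (P₁ - C (1/4:ℝ) * K' * X 0 - C (b/4)) := by
    have h1 : zeroAt 1 (P₁ - C (1/4:ℝ) * K' * X 0 - C (b/4)) * X 0 = 0 := by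
      have := congrArg (zeroAt 1) hUV
      simpa only [map_add, map_mul, map_sub, map_zero, zeroAt_X_self,
        zeroAt_X_ne 1 0 (by decide), zeroAt_C, mul_zero, add_zero] using this
    have h2 := (mul_eq_zero.1 h1).resolve_right (X_ne_zero 0)
    have h3 := X_dvd_sub_zeroAt 1 (P₁ - C (1/4:ℝ) * K' * X 0 - C (b/4))
    rwa [h2, sub_zero] at h3
  have hV : Q₁ - C (1/4:ℝ) * K' * X 1 - C (g/4) = - (f₁ * X 0) := by
    have h1 : X 1 * (f₁ * X 0 + (Q₁ - C (1/4:ℝ) * K' * X 1 - C (g/4))) = 0 := by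
      linear_combination hUV - X 0 * hf₁
    have h2 := (mul_eq_zero.1 h1).resolve_left (X_ne_zero 1)
    linear_combination h2
  -- final assembly
  have hPfin : P = C (1/4:ℝ) * (K' * X 2) * X 0 + (f₀ + X 2 * f₁) * X 1 + C (b/4) * X 2 := by
    linear_combination hP₁ + hf₀ + X 2 * hf₁
  have hQfin : Q = C (1/4:ℝ) * (K' * X 2) * X 1 - (f₀ + X 2 * f₁) * X 0 + C (g/4) * X 2 := by
    linear_combination hQ₁ + hq₀ + X 2 * hV
  have hMval : M = - C (a^2) * K' - (C b * X 0 + C g * X 1) := by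
    rw [← hNeq, hNdef]; ring
  have hRfin : R = C (1/2:ℝ) * K'
        * (- C (a ^ 2) * (X 0 ^ 2 + X 1 ^ 2) + X 2 ^ 2 + C (a ^ 4 - 1))
      - 2 * (C (b/4) * X 0 + C (g/4) * X 1) * (X 0 ^ 2 + X 1 ^ 2 - C (a ^ 2)) := by
    have ha4 : (C (a ^ 4 - 1) : MvPolynomial (Fin 3) ℝ) = C (a ^ 2) ^ 2 - 1 := by
      rw [show a ^ 4 - 1 = (a ^ 2) ^ 2 - 1 by ring, map_sub, map_pow, map_one]
    rw [ha4]
    apply mul_left_cancel₀ mvTwoNeZero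
    have h2R : 2 * R = (X 0 ^ 2 + X 1 ^ 2 - C (a^2))
        * (- C (a^2) * K' - (C b * X 0 + C g * X 1)) + K' * (X 2 ^ 2 - 1) := by
      linear_combination (-1 : MvPolynomial (Fin 3) ℝ) * hAM
        + (X 0 ^ 2 + X 1 ^ 2 - C (a^2)) * hMval
    linear_combination h2R
      - ((X 0 ^ 2 + X 1 ^ 2 - C (a^2)) * X 0) * hCb
      - ((X 0 ^ 2 + X 1 ^ 2 - C (a^2)) * X 1) * hCg
      - (K' * (- C (a^2) * (X 0 ^ 2 + X 1 ^ 2) + X 2 ^ 2 + (C (a^2) ^ 2 - 1))) * C2_eq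
  have hfdeg : (f₀ + X 2 * f₁).totalDegree ≤ 2 := by
    rcases eq_or_ne (f₀ + X 2 * f₁) 0 with h0 | h0
    · rw [h0, totalDegree_zero]; omega
    · have hfx : (f₀ + X 2 * f₁) * X 1
          = P - C (1/4:ℝ) * (K' * X 2) * X 0 - C (b/4) * X 2 := by
        linear_combination - hPfin
      have hb1 : (P - C (1/4:ℝ) * (K' * X 2) * X 0 - C (b/4) * X 2).totalDegree ≤ 3 := by
        refine (totalDegree_sub _ _).trans (max_le ((totalDegree_sub _ _).trans
          (max_le hP ?_)) ?_)
        · refine (totalDegree_mul _ _).trans ?_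
          have hkx : (C (1/4:ℝ) * (K' * X 2) : MvPolynomial (Fin 3) ℝ).totalDegree ≤ 2 := by
            refine (totalDegree_mul _ _).trans ?_
            rw [totalDegree_C]
            have h := totalDegree_mul K' (X (2 : Fin 3) : MvPolynomial (Fin 3) ℝ)
            rw [totalDegree_X] at h
            omega
          rw [totalDegree_X]
          omega
        · refine (totalDegree_mul _ _).trans ?_
          rw [totalDegree_C, totalDegree_X]
          omega
      rw [← hfx, totalDegree_mul_eq h0 (X_ne_zero 1), totalDegree_X] at hb1
      omega
  exact ⟨f₀ + X 2 * f₁, K', b/4, g/4, hfdeg, hK'deg, hPfin, hQfin, hRfin⟩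


theorem stmt_1 (a : ℝ) (ha : 1 < a) (P Q R : MvPolynomial (Fin 3) ℝ)
    (hP : P.totalDegree ≤ 3) (hQ : Q.totalDegree ≤ 3) (hR : R.totalDegree ≤ 3) :
    (IsVFOnTorus a P Q R ↔
      ∃ (f K' : MvPolynomial (Fin 3) ℝ) (β γ : ℝ),
        f.totalDegree ≤ 2 ∧ K'.totalDegree ≤ 1 ∧
        P = C (1/4 : ℝ) * (K' * X 2) * X 0 + f * X 1 + C β * X 2 ∧
        Q = C (1/4 : ℝ) * (K' * X 2) * X 1 - f * X 0 + C γ * X 2 ∧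
        R = C (1/2 : ℝ) * K' * (- C (a ^ 2) * (X 0 ^ 2 + X 1 ^ 2) + X 2 ^ 2 + C (a ^ 4 - 1))
            - 2 * (C β * X 0 + C γ * X 1) * (X 0 ^ 2 + X 1 ^ 2 - C (a ^ 2))) ∧
    (∀ (f K' : MvPolynomial (Fin 3) ℝ) (β γ : ℝ),
        f.totalDegree ≤ 2 → K'.totalDegree ≤ 1 →
        P = C (1/4 : ℝ) * (K' * X 2) * X 0 + f * X 1 + C β * X 2 →
        Q = C (1/4 : ℝ) * (K' * X 2) * X 1 - f * X 0 + C γ * X 2 →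
        R = C (1/2 : ℝ) * K' * (- C (a ^ 2) * (X 0 ^ 2 + X 1 ^ 2) + X 2 ^ 2 + C (a ^ 4 - 1))
            - 2 * (C β * X 0 + C γ * X 1) * (X 0 ^ 2 + X 1 ^ 2 - C (a ^ 2)) →
        vf P Q R (torusF a) = (K' * X 2) * torusF a) := by
  constructor
  · constructor
    · rintro ⟨K, hK⟩
      exact hard_dir a ha P Q R K hP hQ hR hK
    · rintro ⟨f, K', β, γ, hf, hK', hPe, hQe, hRe⟩
      exact ⟨K' * X 2, easy_dir a β γ f K' P Q R hPe hQe hRe⟩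
  · intro f K' β γ _ _ hPe hQe hRe
    exact easy_dir a β γ f K' P Q R hPe hQe hRe
end

section
/- Let n ≥ 1 and let P, Q ∈ ℝ[x,y,z] be homogeneous polynomials of degree n. Then the pseudo-type-n vector field χ = (P,Q,0) is a vector field on 𝕋² if and only if there exists a homogeneous polynomial A ∈ ℝ[x,y,z] of degree n−1 such that P = A·y and Q = −A·x. Furthermore, in this case χ(x²+y²) = 0 and χ(z) = 0, so x²+y² and z are two functionally independent first integrals of χ, which is therefore completely integrable. -/
open MvPolynomial

namespace TorusAux

noncomputable abbrev U (d : ℕ) : MvPolynomial (Fin 3) ℝ →ₗ[ℝ] MvPolynomial (Fin 3) ℝ :=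
  homogeneousComponent d

lemma key_deriv (a : ℝ) (P Q : MvPolynomial (Fin 3) ℝ) :
    vf P Q 0 (torusF a) =
      C 4 * (X 0 ^ 2 + X 1 ^ 2 - C (a ^ 2)) * (X 0 * P + X 1 * Q) := by
  have h10 : (1 : Fin 3) ≠ 0 := by decide
  have h01 : (0 : Fin 3) ≠ 1 := by decide
  have h20 : (2 : Fin 3) ≠ 0 := by decide
  have h21 : (2 : Fin 3) ≠ 1 := by decide
  simp only [vf, torusF, map_sub, map_add, pderiv_pow, pderiv_X_self, pderiv_C, pderiv_one,
    pderiv_X_of_ne h10, pderiv_X_of_ne h01, pderiv_X_of_ne h20, pderiv_X_of_ne h21,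
    map_ofNat]
  push_cast
  ring

/-- Component of a product with a homogeneous polynomial. -/
lemma hc_mul_homog (K H : MvPolynomial (Fin 3) ℝ) {k : ℕ} (hH : H.IsHomogeneous k) (d : ℕ) :
    homogeneousComponent d (K * H) =
      if k ≤ d then homogeneousComponent (d - k) K * H else 0 := by
  conv_lhs => rw [← sum_homogeneousComponent K, Finset.sum_mul, map_sum]
  have hterm : ∀ i : ℕ, homogeneousComponent d (homogeneousComponent i K * H)
      = if d = i + k then homogeneousComponent i K * H else 0 := by
    intro i
    exact homogeneousComponent_of_mem
      (((homogeneousComponent_isHomogeneous i K).mul hH))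
  by_cases hkd : k ≤ d
  · rw [if_pos hkd]
    have : ∀ i ∈ Finset.range (K.totalDegree + 1),
        homogeneousComponent d (homogeneousComponent i K * H)
          = if i = d - k then homogeneousComponent i K * H else 0 := by
      intro i _
      rw [hterm i]
      congr 1
      simp only [eq_iff_iff]
      omega
    rw [Finset.sum_congr rfl this, Finset.sum_ite_eq' (Finset.range (K.totalDegree + 1))]
    split_ifs with h
    · rfl
    · have : homogeneousComponent (d - k) K = 0 := by
        apply homogeneousComponent_eq_zero
        simp only [Finset.mem_range, not_lt] at h
        omega
      rw [this, zero_mul]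
  · rw [if_neg hkd]
    apply Finset.sum_eq_zero
    intro i _
    rw [hterm i, if_neg (by omega)]

lemma eval_zero_ne (c : ℝ) (hc : c ≠ 0) : (C c : MvPolynomial (Fin 3) ℝ) ≠ 0 := by
  simpa using hc

/-- The main algebraic lemma: if `C 4 * (x²+y²-a²) * S = K * F` with `S` homogeneous of
degree `n+1`, then `S = 0`. -/
lemma S_eq_zero (a : ℝ) (ha : 1 < a) (n : ℕ) (S K : MvPolynomial (Fin 3) ℝ)
    (hS : S.IsHomogeneous (n + 1))
    (heq : C 4 * (X 0 ^ 2 + X 1 ^ 2 - C (a ^ 2)) * S = K * torusF a) : S = 0 := by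
  by_contra hS0
  set G2 : MvPolynomial (Fin 3) ℝ := X 0 ^ 2 + X 1 ^ 2 with hG2def
  have hG2 : G2.IsHomogeneous 2 := by
    simpa using (isHomogeneous_X_pow (R := ℝ) (0 : Fin 3) 2).add
      (isHomogeneous_X_pow (R := ℝ) (1 : Fin 3) 2)
  have hH4 : (G2 ^ 2).IsHomogeneous 4 := by
    simpa using hG2.pow 2
  have hH2 : (X 2 ^ 2 - C (2 * a ^ 2) * G2 : MvPolynomial (Fin 3) ℝ).IsHomogeneous 2 := by
    exact (isHomogeneous_X_pow (R := ℝ) (2 : Fin 3) 2).sub (hG2.C_mul _)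
  have hH0 : (C (a ^ 4 - 1) : MvPolynomial (Fin 3) ℝ).IsHomogeneous 0 := isHomogeneous_C _ _
  have hFdec : torusF a = G2 ^ 2 + (X 2 ^ 2 - C (2 * a ^ 2) * G2) + C (a ^ 4 - 1) := by
    simp only [torusF, hG2def, map_sub, map_mul, map_pow, map_ofNat, map_one]
    ring
  -- the left-hand side pieces
  set T1 : MvPolynomial (Fin 3) ℝ := C 4 * G2 * S with hT1def
  set T2 : MvPolynomial (Fin 3) ℝ := C (4 * a ^ 2) * S with hT2def
  have hT1 : T1.IsHomogeneous (n + 3) := by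
    have h := (hG2.C_mul (4 : ℝ)).mul hS
    rw [hT1def, show n + 3 = 2 + (n + 1) by omega]
    exact h
  have hT2 : T2.IsHomogeneous (n + 1) := by
    rw [hT2def]
    exact hS.C_mul (4 * a ^ 2)
  have hTeq : T1 - T2 = K * torusF a := by
    rw [← heq, hT1def, hT2def]
    simp only [hG2def, map_mul, map_pow]
    ring
  -- components of the left-hand side
  have hUT : ∀ d : ℕ, d ≠ n + 3 → d ≠ n + 1 → homogeneousComponent d (K * torusF a) = 0 := by
    intro d hd3 hd1
    rw [← hTeq, map_sub, homogeneousComponent_of_mem hT1, homogeneousComponent_of_mem hT2,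
      if_neg hd3, if_neg hd1, sub_zero]
  -- K is nonzero
  have hG2ne : (X 0 ^ 2 + X 1 ^ 2 - C (a ^ 2) : MvPolynomial (Fin 3) ℝ) ≠ 0 := by
    intro h
    apply_fun eval (fun _ => (0 : ℝ)) at h
    simp at h
    nlinarith
  have hKne : K ≠ 0 := by
    rintro rfl
    rw [zero_mul] at heq
    rcases mul_eq_zero.mp heq with h | h
    · rcases mul_eq_zero.mp h with h | h
      · exact eval_zero_ne 4 (by norm_num) h
      · exact hG2ne h
    · exact hS0 h
  -- minimal nonzero component of K
  have hex : ∃ i, homogeneousComponent i K ≠ 0 := by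
    by_contra hall
    push_neg at hall
    apply hKne
    rw [← sum_homogeneousComponent K]
    exact Finset.sum_eq_zero fun i _ => hall i
  classical
  let m := Nat.find hex
  have hm : homogeneousComponent m K ≠ 0 := Nat.find_spec hex
  have hm_min : ∀ i < m, homogeneousComponent i K = 0 := by
    intro i hi
    have := Nat.find_min hex hi
    exact not_not.mp this
  have hle_td : ∀ i, homogeneousComponent i K ≠ 0 → i ≤ K.totalDegree := by
    intro i hi
    by_contra h
    exact hi (homogeneousComponent_eq_zero _ K (by omega))
  -- maximal nonzero component of K
  let M := Nat.findGreatest (fun i => homogeneousComponent i K ≠ 0) K.totalDegree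
  have hM : homogeneousComponent M K ≠ 0 := by
    refine Nat.findGreatest_spec (P := fun i => homogeneousComponent i K ≠ 0) ?_ hm
    exact hle_td m hm
  have hM_max : ∀ i > M, homogeneousComponent i K = 0 := by
    intro i hi
    by_contra h
    have h1 : i ≤ K.totalDegree := hle_td i h
    have := Nat.le_findGreatest (P := fun i => homogeneousComponent i K ≠ 0) h1 h
    omega
  have hmM : m ≤ M :=
    Nat.le_findGreatest (P := fun i => homogeneousComponent i K ≠ 0) (hle_td m hm) hm
  have ha2 : (1 : ℝ) < a ^ 2 := by nlinarith
  have ha4 : (1 : ℝ) < a ^ 4 := by nlinarith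
  have H0ne : (C (a ^ 4 - 1) : MvPolynomial (Fin 3) ℝ) ≠ 0 :=
    eval_zero_ne _ (by intro h; linarith)
  have H4ne : (G2 ^ 2 : MvPolynomial (Fin 3) ℝ) ≠ 0 := by
    intro h
    apply_fun eval (fun _ => (1 : ℝ)) at h
    simp [hG2def] at h
  -- component of degree m of K * F
  have hcompF : ∀ d : ℕ, homogeneousComponent d (K * torusF a) =
      (if 4 ≤ d then homogeneousComponent (d - 4) K * G2 ^ 2 else 0)
      + (if 2 ≤ d then homogeneousComponent (d - 2) K * (X 2 ^ 2 - C (2 * a ^ 2) * G2) else 0)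
      + homogeneousComponent d K * C (a ^ 4 - 1) := by
    intro d
    rw [hFdec, mul_add, mul_add, map_add, map_add,
      hc_mul_homog K _ hH4, hc_mul_homog K _ hH2, hc_mul_homog K _ hH0]
    simp
  have hmlow : homogeneousComponent m (K * torusF a) ≠ 0 := by
    rw [hcompF m]
    have h4 : (if 4 ≤ m then homogeneousComponent (m - 4) K * G2 ^ 2 else 0) = 0 := by
      split_ifs with h
      · rw [hm_min (m - 4) (by omega), zero_mul]
      · rfl
    have h2 : (if 2 ≤ m then
        homogeneousComponent (m - 2) K * (X 2 ^ 2 - C (2 * a ^ 2) * G2) else 0) = 0 := by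
      split_ifs with h
      · rw [hm_min (m - 2) (by omega), zero_mul]
      · rfl
    rw [h4, h2, zero_add, zero_add]
    exact mul_ne_zero hm H0ne
  have hMhigh : homogeneousComponent (M + 4) (K * torusF a) ≠ 0 := by
    rw [hcompF (M + 4)]
    have h2 : homogeneousComponent (M + 4 - 2) K = 0 := hM_max _ (by omega)
    have h0 : homogeneousComponent (M + 4) K = 0 := hM_max _ (by omega)
    rw [if_pos (by omega), if_pos (by omega), h2, h0, zero_mul, zero_mul, add_zero, add_zero]
    have : M + 4 - 4 = M := by omega
    rw [this]
    exact mul_ne_zero hM H4ne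
  -- degrees must match, contradiction
  have hm_mem : m = n + 3 ∨ m = n + 1 := by
    by_contra h
    push_neg at h
    exact hmlow (hUT m h.1 h.2)
  have hM_mem : M + 4 = n + 3 ∨ M + 4 = n + 1 := by
    by_contra h
    push_neg at h
    exact hMhigh (hUT (M + 4) h.1 h.2)
  omega

end TorusAux

open TorusAux in
theorem stmt_3 (a : ℝ) (ha : 1 < a) (n : ℕ) (hn : 1 ≤ n)
    (P Q : MvPolynomial (Fin 3) ℝ)
    (hP : P.IsHomogeneous n) (hQ : Q.IsHomogeneous n) :
    (IsVFOnTorus a P Q 0 ↔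
      ∃ A : MvPolynomial (Fin 3) ℝ, A.IsHomogeneous (n - 1) ∧
        P = A * X 1 ∧ Q = -(A * X 0)) ∧
    (IsVFOnTorus a P Q 0 →
      vf P Q 0 (X 0 ^ 2 + X 1 ^ 2) = 0 ∧ vf P Q 0 (X 2) = 0) := by
  have hX0 : (X 0 : MvPolynomial (Fin 3) ℝ) ≠ 0 := X_ne_zero 0
  -- key structural fact: being a VF on the torus forces x P + y Q = 0
  have hforces : IsVFOnTorus a P Q 0 → X 0 * P + X 1 * Q = 0 := by
    rintro ⟨K, hK⟩
    rw [key_deriv a P Q] at hK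
    have hShom : (X 0 * P + X 1 * Q).IsHomogeneous (n + 1) := by
      have h1 : (X 0 * P : MvPolynomial (Fin 3) ℝ).IsHomogeneous (1 + n) :=
        (isHomogeneous_X _ _).mul hP
      have h2 : (X 1 * Q : MvPolynomial (Fin 3) ℝ).IsHomogeneous (1 + n) :=
        (isHomogeneous_X _ _).mul hQ
      have := h1.add h2
      rwa [add_comm 1 n] at this
    exact S_eq_zero a ha n _ K hShom hK
  constructor
  · constructor
    · intro hvf
      have hS : X 0 * P + X 1 * Q = 0 := hforces hvf
      by_cases hQ0 : Q = 0
      · refine ⟨0, isHomogeneous_zero _ _ _, ?_, by simp [hQ0]⟩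
        have : X 0 * P = 0 := by rw [hQ0, mul_zero, add_zero] at hS; exact hS
        rcases mul_eq_zero.mp this with h | h
        · exact absurd h hX0
        · simp [h]
      · -- X 0 divides Q
        have hdvd : (X 0 : MvPolynomial (Fin 3) ℝ) ∣ Q := by
          rw [X_dvd_iff_modMonomial_eq_zero]
          ext d
          by_cases hle : Finsupp.single (0 : Fin 3) 1 ≤ d
          · rw [coeff_modMonomial_of_le Q hle, coeff_zero]
          · rw [coeff_modMonomial_of_not_le Q hle, coeff_zero]
            -- here d 0 = 0
            have hd0 : d 0 = 0 := by
              by_contra h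
              exact hle (Finsupp.single_le_iff.mpr (by omega))
            have := congrArg (coeff (Finsupp.single (1 : Fin 3) 1 + d)) hS
            rw [coeff_add, coeff_X_mul, coeff_zero] at this
            have hx0 : coeff (Finsupp.single (1 : Fin 3) 1 + d) (X 0 * P) = 0 := by
              classical
              rw [coeff_X_mul']
              rw [if_neg]
              simp only [Finsupp.mem_support_iff, ne_eq, not_not]
              simp [Finsupp.single_apply, hd0]
            rw [hx0, zero_add] at this
            exact this
        obtain ⟨B, hB⟩ := hdvd
        have hPB : P = -B * X 1 := by
          have h0 : X 0 * (P + X 1 * B) = 0 := by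
            rw [hB] at hS
            linear_combination hS
          rcases mul_eq_zero.mp h0 with h | h
          · exact absurd h hX0
          · have : P = -(X 1 * B) := by linear_combination h
            rw [this]; ring
        -- homogeneity of B
        have hBcomp : ∀ j : ℕ, j ≠ n - 1 → homogeneousComponent j B = 0 := by
          intro j hj
          have h1 : homogeneousComponent (j + 1) Q = 0 := by
            rw [homogeneousComponent_of_mem hQ, if_neg (by omega)]
          rw [hB, mul_comm, hc_mul_homog B (X 0) (isHomogeneous_X _ _) (j + 1),
            if_pos (by omega)] at h1
          simp only [Nat.add_sub_cancel] at h1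
          rcases mul_eq_zero.mp h1 with h | h
          · exact h
          · exact absurd h hX0
        have hBeq : B = homogeneousComponent (n - 1) B := by
          conv_lhs => rw [← sum_homogeneousComponent B]
          rw [Finset.sum_eq_single (n - 1)]
          · intro b _ hb
            exact hBcomp b hb
          · intro h
            exact homogeneousComponent_eq_zero _ B
              (by simp only [Finset.mem_range, not_lt] at h; omega)
        have hBhom : B.IsHomogeneous (n - 1) := by
          rw [hBeq]
          exact homogeneousComponent_isHomogeneous _ _
        refine ⟨-B, hBhom.neg, by rw [hPB], ?_⟩
        rw [hB]; ring
    · rintro ⟨A, hA, hPA, hQA⟩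
      refine ⟨0, ?_⟩
      rw [key_deriv a P Q, hPA, hQA, zero_mul]
      ring
  · intro hvf
    have hS : X 0 * P + X 1 * Q = 0 := hforces hvf
    constructor
    · have h10 : (1 : Fin 3) ≠ 0 := by decide
      have h01 : (0 : Fin 3) ≠ 1 := by decide
      simp only [vf, map_add, pderiv_pow, pderiv_X_self, pderiv_X_of_ne h10,
        pderiv_X_of_ne h01]
      push_cast
      linear_combination (2 : MvPolynomial (Fin 3) ℝ) * hS
    · have h20 : (2 : Fin 3) ≠ 0 := by decide
      have h21 : (2 : Fin 3) ≠ 1 := by decide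
      simp [vf, pderiv_X_of_ne h20, pderiv_X_of_ne h21]
end

section
/- Let K' ∈ ℝ[x,y,z] with deg K' ≤ 1, let c ∈ ℝ with c ≠ 0, let (a₁,b₁), (a₂,b₂) ∈ ℝ² ∖ {(0,0)}, and set f = c(a₁x+b₁y)(a₂x+b₂y). Define the cubic vector field χ = (P,Q,R) on 𝕋² by P = (1/4)K'z·x + f·y, Q = (1/4)K'z·y − f·x, R = (1/2)K'·(−a²(x²+y²)+z²+a⁴−1) (this is the general cubic vector field on 𝕋² with four invariant meridians, given by the planes a₁x+b₁y = 0 and a₂x+b₂y = 0). Then a point q = (x₀,y₀,z₀) ∈ 𝕋² with a₁x₀+b₁y₀ = 0 or a₂x₀+b₂y₀ = 0 is a singular point of χ if and only if K'(x₀,y₀,z₀) = 0. (Since an invariant closed curve is a periodic orbit iff it contains no singular point, this is the content of the theorem that the four invariant meridians are limit cycles iff K' = 0 has no solution on them.) -/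
open MvPolynomial

theorem stmt_4 (a : ℝ) (ha : 1 < a)
    (K' : MvPolynomial (Fin 3) ℝ) (hK' : K'.totalDegree ≤ 1)
    (c : ℝ) (hc : c ≠ 0) (a₁ b₁ a₂ b₂ : ℝ)
    (h1 : (a₁, b₁) ≠ (0, 0)) (h2 : (a₂, b₂) ≠ (0, 0))
    (f P Q R : MvPolynomial (Fin 3) ℝ)
    (hf : f = C c * (C a₁ * X 0 + C b₁ * X 1) * (C a₂ * X 0 + C b₂ * X 1))
    (hP : P = C (1/4 : ℝ) * (K' * X 2) * X 0 + f * X 1)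
    (hQ : Q = C (1/4 : ℝ) * (K' * X 2) * X 1 - f * X 0)
    (hR : R = C (1/2 : ℝ) * K' * (- C (a ^ 2) * (X 0 ^ 2 + X 1 ^ 2) + X 2 ^ 2 + C (a ^ 4 - 1)))
    (x₀ y₀ z₀ : ℝ) (hq : (x₀ ^ 2 + y₀ ^ 2 - a ^ 2) ^ 2 + z₀ ^ 2 = 1)
    (hmer : a₁ * x₀ + b₁ * y₀ = 0 ∨ a₂ * x₀ + b₂ * y₀ = 0) :
    (eval ![x₀, y₀, z₀] P = 0 ∧ eval ![x₀, y₀, z₀] Q = 0 ∧ eval ![x₀, y₀, z₀] R = 0) ↔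
      eval ![x₀, y₀, z₀] K' = 0 := by
  set k := eval ![x₀, y₀, z₀] K' with hk
  have hf0 : eval ![x₀, y₀, z₀] f = 0 := by
    rcases hmer with h | h <;> simp [hf, h]
  have hPe : eval ![x₀, y₀, z₀] P = (1/4) * (k * z₀) * x₀ := by
    simp [hP, hf0, hk]
  have hQe : eval ![x₀, y₀, z₀] Q = (1/4) * (k * z₀) * y₀ := by
    simp [hQ, hf0, hk]
  have hRe : eval ![x₀, y₀, z₀] R =
      (1/2) * k * (-(a^2) * (x₀^2 + y₀^2) + z₀^2 + (a^4 - 1)) := by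
    simp [hR, hk]
  rw [hPe, hQe, hRe]
  constructor
  · rintro ⟨hp, hq', hr⟩
    by_contra hk0
    have hzx : z₀ * x₀ = 0 := by
      have : k * (z₀ * x₀) = 0 := by linear_combination 4 * hp
      exact (mul_eq_zero.1 this).resolve_left hk0
    have hzy : z₀ * y₀ = 0 := by
      have : k * (z₀ * y₀) = 0 := by linear_combination 4 * hq'
      exact (mul_eq_zero.1 this).resolve_left hk0
    have hr' : -(a^2) * (x₀^2 + y₀^2) + z₀^2 + (a^4 - 1) = 0 := by
      have : k * (-(a^2) * (x₀^2 + y₀^2) + z₀^2 + (a^4 - 1)) = 0 := by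
        linear_combination 2 * hr
      exact (mul_eq_zero.1 this).resolve_left hk0
    rcases eq_or_ne z₀ 0 with hz | hz
    · subst hz
      nlinarith [sq_nonneg (x₀^2 + y₀^2), sq_nonneg a, sq_nonneg (a^2 - 1), sq_nonneg (a^2 + 1), sq_nonneg (a^2*(x₀^2+y₀^2) - a^4)]
    · have hx : x₀ = 0 := by
        rcases mul_eq_zero.1 hzx with h | h; exact absurd h hz; exact h
      have hy : y₀ = 0 := by
        rcases mul_eq_zero.1 hzy with h | h; exact absurd h hz; exact h
      subst hx; subst hy
      have ha2 : 1 < a ^ 2 := by nlinarith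
      have ha4 : 1 < a ^ 4 := by nlinarith
      nlinarith [sq_nonneg z₀]
  · intro hk0; rw [hk0]; norm_num
end

section
/- Let c₁, c₂ ∈ ℝ with c₁ ≠ 0 and c₂ ≠ 0, and let χ = (P,Q,R) be the cubic Kolmogorov vector field on 𝕋² given by P = (1/4)c₂z²x + c₁xy², Q = (1/4)c₂z²y − c₁x²y, R = (c₂/2)z(−a²(x²+y²)+z²+a⁴−1) (the conditions c₁ ≠ 0 and c₂ ≠ 0 amount to χ having finitely many invariant meridians and invariant parallels). Then: (i) for every (α,β) ∈ ℝ² ∖ {(0,0)} such that αx+βy = 0 is an invariant meridian plane of χ, one has α = 0 or β = 0, and both x = 0 and y = 0 are invariant meridian planes; (ii) for every k ∈ ℝ such that z−k = 0 is an invariant parallel plane of χ, one has k = 0, and z = 0 is an invariant parallel plane. -/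
open MvPolynomial

theorem stmt_5 (a : ℝ) (ha : 1 < a) (c₁ c₂ : ℝ) (hc₁ : c₁ ≠ 0) (hc₂ : c₂ ≠ 0)
    (P Q R : MvPolynomial (Fin 3) ℝ)
    (hP : P = C (1/4 : ℝ) * C c₂ * X 2 ^ 2 * X 0 + C c₁ * X 0 * X 1 ^ 2)
    (hQ : Q = C (1/4 : ℝ) * C c₂ * X 2 ^ 2 * X 1 - C c₁ * X 0 ^ 2 * X 1)
    (hR : R = C (c₂ / 2) * X 2 *
      (- C (a ^ 2) * (X 0 ^ 2 + X 1 ^ 2) + X 2 ^ 2 + C (a ^ 4 - 1))) :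
    ((∀ α β : ℝ, (α, β) ≠ (0, 0) →
        (∃ K₀ : MvPolynomial (Fin 3) ℝ,
          C α * P + C β * Q = K₀ * (C α * X 0 + C β * X 1)) → α = 0 ∨ β = 0) ∧
      (∃ K₀ : MvPolynomial (Fin 3) ℝ, P = K₀ * X 0) ∧
      (∃ K₀ : MvPolynomial (Fin 3) ℝ, Q = K₀ * X 1)) ∧
    ((∀ k : ℝ, (X 2 - C k) ∣ R → k = 0) ∧ X 2 ∣ R) := by
  subst hP hQ hR
  constructor
  · refine ⟨?_, ⟨C (1/4 : ℝ) * C c₂ * X 2 ^ 2 + C c₁ * X 1 ^ 2, by ring⟩,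
      ⟨C (1/4 : ℝ) * C c₂ * X 2 ^ 2 - C c₁ * X 0 ^ 2, by ring⟩⟩
    rintro α β hαβ ⟨K₀, hK⟩
    by_contra h
    push_neg at h
    obtain ⟨hα, hβ⟩ := h
    have h1 := congrArg (eval ![β, -α, 0]) hK
    simp [eval_mul, eval_add, eval_sub] at h1
    have h2 : c₁ * β * α * (α ^ 2 + β ^ 2) = 0 := by linear_combination h1
    have hpos : (0:ℝ) < α ^ 2 + β ^ 2 := by positivity
    exact mul_ne_zero (mul_ne_zero (mul_ne_zero hc₁ hβ) hα) hpos.ne' h2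
  · constructor
    · rintro k ⟨S, hS⟩
      have h1 := congrArg (eval ![0, 0, k]) hS
      simp [eval_mul, eval_add, eval_sub] at h1
      by_contra hk
      have ha4 : 1 < a ^ 4 := by nlinarith [sq_nonneg (a - 1), sq_nonneg (a ^ 2 - 1)]
      rcases h1 with (h1 | h1) | h1
      · exact hc₂ h1
      · exact hk h1
      · nlinarith [sq_nonneg k]
    · exact ⟨C (c₂ / 2) * (- C (a ^ 2) * (X 0 ^ 2 + X 1 ^ 2) + X 2 ^ 2 + C (a ^ 4 - 1)),
        by ring⟩
end

section
/- Let χ = (P,Q,R) be a vector field on 𝕋² with deg P, deg Q, deg R ≤ 2 such that R is not the zero polynomial. Then χ has no singular point on 𝕋²: there is no point (x₀,y₀,z₀) ∈ ℝ³ with (x₀²+y₀²−a²)² + z₀² = 1 at which P, Q and R all vanish. -/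
open MvPolynomial

noncomputable def μ (i j k : ℕ) : Fin 3 →₀ ℕ :=
  Finsupp.single 0 i + Finsupp.single 1 j + Finsupp.single 2 k

@[simp] lemma μ_apply0 (i j k : ℕ) : μ i j k 0 = i := by
  simp [μ, Finsupp.single_apply]
@[simp] lemma μ_apply1 (i j k : ℕ) : μ i j k 1 = j := by
  simp [μ, Finsupp.single_apply]
@[simp] lemma μ_apply2 (i j k : ℕ) : μ i j k 2 = k := by
  simp [μ, Finsupp.single_apply]

lemma μ_eq_iff {i j k i' j' k' : ℕ} : μ i j k = μ i' j' k' ↔ i = i' ∧ j = j' ∧ k = k' := by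
  constructor
  · intro h
    exact ⟨by simpa using congrArg (fun f => f 0) h, by simpa using congrArg (fun f => f 1) h,
      by simpa using congrArg (fun f => f 2) h⟩
  · rintro ⟨rfl, rfl, rfl⟩; rfl

lemma eq_μ (m : Fin 3 →₀ ℕ) : m = μ (m 0) (m 1) (m 2) := by
  refine Finsupp.ext fun l => ?_
  fin_cases l <;> simp

lemma mon_eq (c : ℝ) (i j k : ℕ) :
    C c * X 0 ^ i * X 1 ^ j * X 2 ^ k = monomial (μ i j k) c := by
  simp [μ, X_pow_eq_monomial, monomial_mul, C_mul_monomial]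

lemma μ_sum (i j k : ℕ) : (μ i j k).sum (fun _ e => e) = i + j + k := by
  rw [Finsupp.sum_fintype]
  · rw [Fin.sum_univ_three]; simp
  · intro; rfl

lemma coeff_zero_of_deg {P : MvPolynomial (Fin 3) ℝ} (hP : P.totalDegree ≤ 2)
    {m : Fin 3 →₀ ℕ} (h : ¬ (m 0 + m 1 + m 2 ≤ 2)) : coeff m P = 0 := by
  by_contra hc
  have hm : m ∈ P.support := by simpa [mem_support_iff] using hc
  have := le_totalDegree hm
  rw [eq_μ m, μ_sum] at this
  omega

lemma quad_rep (P : MvPolynomial (Fin 3) ℝ) (hP : P.totalDegree ≤ 2) :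
    P = C (coeff (μ 0 0 0) P) * X 0 ^ 0 * X 1 ^ 0 * X 2 ^ 0
      + C (coeff (μ 1 0 0) P) * X 0 ^ 1 * X 1 ^ 0 * X 2 ^ 0
      + C (coeff (μ 0 1 0) P) * X 0 ^ 0 * X 1 ^ 1 * X 2 ^ 0
      + C (coeff (μ 0 0 1) P) * X 0 ^ 0 * X 1 ^ 0 * X 2 ^ 1
      + C (coeff (μ 2 0 0) P) * X 0 ^ 2 * X 1 ^ 0 * X 2 ^ 0
      + C (coeff (μ 1 1 0) P) * X 0 ^ 1 * X 1 ^ 1 * X 2 ^ 0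
      + C (coeff (μ 1 0 1) P) * X 0 ^ 1 * X 1 ^ 0 * X 2 ^ 1
      + C (coeff (μ 0 2 0) P) * X 0 ^ 0 * X 1 ^ 2 * X 2 ^ 0
      + C (coeff (μ 0 1 1) P) * X 0 ^ 0 * X 1 ^ 1 * X 2 ^ 1
      + C (coeff (μ 0 0 2) P) * X 0 ^ 0 * X 1 ^ 0 * X 2 ^ 2 := by
  apply MvPolynomial.ext
  intro m
  simp only [mon_eq, coeff_add, coeff_monomial]
  by_cases hs : m 0 + m 1 + m 2 ≤ 2
  · obtain ⟨i, j, k, hle, rfl⟩ : ∃ i j k, i + j + k ≤ 2 ∧ m = μ i j k :=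
      ⟨m 0, m 1, m 2, hs, eq_μ m⟩
    have hi : i ≤ 2 := by omega
    have hj : j ≤ 2 := by omega
    have hk : k ≤ 2 := by omega
    interval_cases i <;> interval_cases j <;> interval_cases k <;>
      first
        | omega
        | (norm_num [μ_eq_iff])
  · rw [coeff_zero_of_deg hP hs]
    have hne : ∀ i j k : ℕ, i + j + k ≤ 2 → ¬ (μ i j k = m) := by
      intro i j k hle he
      exact hs (by rw [← he]; simp; omega)
    rw [if_neg (hne 0 0 0 (by norm_num)), if_neg (hne 1 0 0 (by norm_num)),
      if_neg (hne 0 1 0 (by norm_num)), if_neg (hne 0 0 1 (by norm_num)),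
      if_neg (hne 2 0 0 (by norm_num)), if_neg (hne 1 1 0 (by norm_num)),
      if_neg (hne 1 0 1 (by norm_num)), if_neg (hne 0 2 0 (by norm_num)),
      if_neg (hne 0 1 1 (by norm_num)), if_neg (hne 0 0 2 (by norm_num))]
    norm_num

lemma quad_rep' (P : MvPolynomial (Fin 3) ℝ) (hP : P.totalDegree ≤ 2) :
    ∃ c000 c100 c010 c001 c200 c110 c101 c020 c011 c002 : ℝ,
    P = C c000 * X 0 ^ 0 * X 1 ^ 0 * X 2 ^ 0
      + C c100 * X 0 ^ 1 * X 1 ^ 0 * X 2 ^ 0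
      + C c010 * X 0 ^ 0 * X 1 ^ 1 * X 2 ^ 0
      + C c001 * X 0 ^ 0 * X 1 ^ 0 * X 2 ^ 1
      + C c200 * X 0 ^ 2 * X 1 ^ 0 * X 2 ^ 0
      + C c110 * X 0 ^ 1 * X 1 ^ 1 * X 2 ^ 0
      + C c101 * X 0 ^ 1 * X 1 ^ 0 * X 2 ^ 1
      + C c020 * X 0 ^ 0 * X 1 ^ 2 * X 2 ^ 0
      + C c011 * X 0 ^ 0 * X 1 ^ 1 * X 2 ^ 1
      + C c002 * X 0 ^ 0 * X 1 ^ 0 * X 2 ^ 2 :=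
  ⟨_, _, _, _, _, _, _, _, _, _, quad_rep P hP⟩

lemma pdF0 (a : ℝ) : pderiv 0 (torusF a) = 4 * X 0 * (X 0 ^ 2 + X 1 ^ 2 - C (a ^ 2)) := by
  simp [torusF, pderiv_pow, pderiv_X, Finsupp.single_apply]; ring

lemma pdF1 (a : ℝ) : pderiv 1 (torusF a) = 4 * X 1 * (X 0 ^ 2 + X 1 ^ 2 - C (a ^ 2)) := by
  simp [torusF, pderiv_pow, pderiv_X, Finsupp.single_apply]; ring

lemma pdF2 (a : ℝ) : pderiv 2 (torusF a) = 2 * X 2 := by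
  simp [torusF, pderiv_pow, pderiv_X, Finsupp.single_apply]

set_option maxHeartbeats 0 in
theorem stmt_7 (a : ℝ) (ha : 1 < a) (P Q R : MvPolynomial (Fin 3) ℝ)
    (hP : P.totalDegree ≤ 2) (hQ : Q.totalDegree ≤ 2) (hR : R.totalDegree ≤ 2)
    (hR0 : R ≠ 0) (hvf : IsVFOnTorus a P Q R) :
    ¬ ∃ x₀ y₀ z₀ : ℝ, (x₀ ^ 2 + y₀ ^ 2 - a ^ 2) ^ 2 + z₀ ^ 2 = 1 ∧
      eval ![x₀, y₀, z₀] P = 0 ∧ eval ![x₀, y₀, z₀] Q = 0 ∧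
      eval ![x₀, y₀, z₀] R = 0 := by
  rintro ⟨x₀, y₀, z₀, htor, hPe, hQe, hRe⟩
  obtain ⟨K, hK⟩ := hvf
  obtain ⟨p000, p100, p010, p001, p200, p110, p101, p020, p011, p002, hPrep⟩ := quad_rep' P hP
  obtain ⟨q000, q100, q010, q001, q200, q110, q101, q020, q011, q002, hQrep⟩ := quad_rep' Q hQ
  obtain ⟨r000, r100, r010, r001, r200, r110, r101, r020, r011, r002, hRrep⟩ := quad_rep' R hR
  have f1 : (0:ℝ) < a := by linarith
  have f2 : (0:ℝ) < a^2 := by positivity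
  have f3 : (0:ℝ) < a^2 + 1 := by positivity
  have f4 : (0:ℝ) < a^4 - 9/25 := by nlinarith [sq_nonneg (a^2 - 1), sq_nonneg (a - 1), f2]
  have h21 : (0:ℝ) < a^2 - 1 := by nlinarith
  have h235 : (0:ℝ) < a^2 - 3/5 := by nlinarith
  have f2' : (1:ℝ) < a^2 := by nlinarith [sq_nonneg (a - 1)]
  have f5 : (1:ℝ) < a^4 := by nlinarith [sq_nonneg (a^2 - 1), f2']
  have hden1 : (0:ℝ) < ((1 : ℝ) * a) := by nlinarith [f1, f2, f3, f4, mul_pos f1 f4, mul_pos f2 f4, mul_pos f3 f4, mul_pos f2 (mul_pos f3 f4), mul_pos f1 (mul_pos f3 f4)]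
  have hden2 : (0:ℝ) < ((1 : ℝ) * a^5 + ((-9 : ℝ)/25) * a) := by nlinarith [f1, f2, f3, f4, mul_pos f1 f4, mul_pos f2 f4, mul_pos f3 f4, mul_pos f2 (mul_pos f3 f4), mul_pos f1 (mul_pos f3 f4)]
  have hden3 : (0:ℝ) < ((1 : ℝ) * a^4 + ((-9 : ℝ)/25)) := by nlinarith [f1, f2, f3, f4, mul_pos f1 f4, mul_pos f2 f4, mul_pos f3 f4, mul_pos f2 (mul_pos f3 f4), mul_pos f1 (mul_pos f3 f4)]
  have hden4 : (0:ℝ) < ((1 : ℝ) * a^6 + ((-9 : ℝ)/25) * a^2) := by nlinarith [f1, f2, f3, f4, mul_pos f1 f4, mul_pos f2 f4, mul_pos f3 f4, mul_pos f2 (mul_pos f3 f4), mul_pos f1 (mul_pos f3 f4)]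
  have hden5 : (0:ℝ) < ((1 : ℝ) * a^2 + (1 : ℝ)) := by nlinarith [f1, f2, f3, f4, mul_pos f1 f4, mul_pos f2 f4, mul_pos f3 f4, mul_pos f2 (mul_pos f3 f4), mul_pos f1 (mul_pos f3 f4)]
  have hden6 : (0:ℝ) < ((1 : ℝ) * a^6 + (1 : ℝ) * a^4 + ((-9 : ℝ)/25) * a^2 + ((-9 : ℝ)/25)) := by nlinarith [f1, f2, f3, f4, mul_pos f1 f4, mul_pos f2 f4, mul_pos f3 f4, mul_pos f2 (mul_pos f3 f4), mul_pos f1 (mul_pos f3 f4)]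
  have hden7 : (0:ℝ) < ((1 : ℝ) * a^8 + (1 : ℝ) * a^6 + ((-9 : ℝ)/25) * a^4 + ((-9 : ℝ)/25) * a^2) := by nlinarith [f1, f2, f3, f4, mul_pos f1 f4, mul_pos f2 f4, mul_pos f3 f4, mul_pos f2 (mul_pos f3 f4), mul_pos f1 (mul_pos f3 f4)]
  have hPev : ∀ x y z : ℝ, eval ![x, y, z] P = p000 + p100*x + p010*y + p001*z + p200*x^2 + p110*x*y + p101*x*z + p020*y^2 + p011*y*z + p002*z^2 := by
    intro x y z; rw [hPrep]; simp; try ring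
  have hQev : ∀ x y z : ℝ, eval ![x, y, z] Q = q000 + q100*x + q010*y + q001*z + q200*x^2 + q110*x*y + q101*x*z + q020*y^2 + q011*y*z + q002*z^2 := by
    intro x y z; rw [hQrep]; simp; try ring
  have hRev : ∀ x y z : ℝ, eval ![x, y, z] R = r000 + r100*x + r010*y + r001*z + r200*x^2 + r110*x*y + r101*x*z + r020*y^2 + r011*y*z + r002*z^2 := by
    intro x y z; rw [hRrep]; simp; try ring
  have Heval : ∀ x y z : ℝ, (x^2 + y^2 - a^2)^2 + z^2 = 1 →
      4*x*(x^2+y^2-a^2) * (p000 + p100*x + p010*y + p001*z + p200*x^2 + p110*x*y + p101*x*z + p020*y^2 + p011*y*z + p002*z^2)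
      + 4*y*(x^2+y^2-a^2) * (q000 + q100*x + q010*y + q001*z + q200*x^2 + q110*x*y + q101*x*z + q020*y^2 + q011*y*z + q002*z^2)
      + 2*z * (r000 + r100*x + r010*y + r001*z + r200*x^2 + r110*x*y + r101*x*z + r020*y^2 + r011*y*z + r002*z^2) = 0 := by
    intro x y z ht
    have h := congrArg (eval ![x, y, z]) hK
    unfold vf at h
    rw [pdF0, pdF1, pdF2] at h
    have hF0 : eval ![x, y, z] (torusF a) = 0 := by
      simp [torusF]; linear_combination ht
    rw [map_mul, hF0, mul_zero] at h
    simp at h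
    rw [hPev x y z, hQev x y z, hRev x y z] at h
    linear_combination h
  set W1 := Real.sqrt (a^2 + 3/5) with hW1def
  have hwW1 : W1^2 = a^2 + 3/5 := Real.sq_sqrt (by positivity)
  have hwW1pos : 0 < W1 := Real.sqrt_pos.mpr (by positivity)
  set W2 := Real.sqrt (a^2 - 3/5) with hW2def
  have hwW2 : W2^2 = a^2 - 3/5 := Real.sq_sqrt (le_of_lt h235)
  have hwW2pos : 0 < W2 := Real.sqrt_pos.mpr h235
  set W3 := Real.sqrt (a^2 + 1) with hW3def
  have hwW3 : W3^2 = a^2 + 1 := Real.sq_sqrt (by positivity)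
  have hwW3pos : 0 < W3 := Real.sqrt_pos.mpr (by positivity)
  set W4 := Real.sqrt (a^2 - 1) with hW4def
  have hwW4 : W4^2 = a^2 - 1 := Real.sq_sqrt (le_of_lt h21)
  have hwW4pos : 0 < W4 := Real.sqrt_pos.mpr h21
  have hE1 := Heval ((1 : ℝ)*a) ((0 : ℝ)*a) (1 : ℝ) (by ring)
  have hE2 := Heval ((0 : ℝ)*a) ((1 : ℝ)*a) (1 : ℝ) (by ring)
  have hE3 := Heval (((3 : ℝ)/5)*a) (((4 : ℝ)/5)*a) (1 : ℝ) (by ring)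
  have hE4 := Heval ((1 : ℝ)*a) ((0 : ℝ)*a) (-1 : ℝ) (by ring)
  have hE5 := Heval ((0 : ℝ)*a) ((1 : ℝ)*a) (-1 : ℝ) (by ring)
  have hE6 := Heval (((3 : ℝ)/5)*a) (((4 : ℝ)/5)*a) (-1 : ℝ) (by ring)
  have hp1 := Heval ((1 : ℝ)*W3) ((0 : ℝ)*W3) (0 : ℝ) (by linear_combination (W3^2 - a^2 + (1 : ℝ)) * hwW3)
  have hm1 := Heval (-((1 : ℝ)*W3)) (-((0 : ℝ)*W3)) (0 : ℝ) (by linear_combination (W3^2 - a^2 + (1 : ℝ)) * hwW3)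
  have hA1 : (((4 : ℝ) * a^2 + (4 : ℝ)) * p100) = 0 := by
    linear_combination ((1:ℝ)/2) * hp1 + ((1:ℝ)/2) * hm1 - ((((4 : ℝ)) * p100 + ((4 : ℝ)) * p100 * W3^2)) * hwW3
  have hBW1 : W3 * ((((4 : ℝ)) * p000 + ((4 : ℝ) * a^2 + (4 : ℝ)) * p200)) = 0 := by
    linear_combination ((1:ℝ)/2) * hp1 - ((1:ℝ)/2) * hm1 - ((((4 : ℝ)) * p000 * W3 + ((4 : ℝ)) * p200 * W3 + ((4 : ℝ)) * p200 * W3^3)) * hwW3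
  have hB1 : (((4 : ℝ)) * p000 + ((4 : ℝ) * a^2 + (4 : ℝ)) * p200) = 0 :=
    (mul_eq_zero.mp hBW1).resolve_left (ne_of_gt hwW3pos)
  have hp2 := Heval ((0 : ℝ)*W3) ((1 : ℝ)*W3) (0 : ℝ) (by linear_combination (W3^2 - a^2 + (1 : ℝ)) * hwW3)
  have hm2 := Heval (-((0 : ℝ)*W3)) (-((1 : ℝ)*W3)) (0 : ℝ) (by linear_combination (W3^2 - a^2 + (1 : ℝ)) * hwW3)
  have hA2 : (((4 : ℝ) * a^2 + (4 : ℝ)) * q010) = 0 := by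
    linear_combination ((1:ℝ)/2) * hp2 + ((1:ℝ)/2) * hm2 - ((((4 : ℝ)) * q010 + ((4 : ℝ)) * q010 * W3^2)) * hwW3
  have hBW2 : W3 * ((((4 : ℝ)) * q000 + ((4 : ℝ) * a^2 + (4 : ℝ)) * q020)) = 0 := by
    linear_combination ((1:ℝ)/2) * hp2 - ((1:ℝ)/2) * hm2 - ((((4 : ℝ)) * q000 * W3 + ((4 : ℝ)) * q020 * W3 + ((4 : ℝ)) * q020 * W3^3)) * hwW3
  have hB2 : (((4 : ℝ)) * q000 + ((4 : ℝ) * a^2 + (4 : ℝ)) * q020) = 0 :=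
    (mul_eq_zero.mp hBW2).resolve_left (ne_of_gt hwW3pos)
  have hp3 := Heval (((3 : ℝ)/5)*W3) (((4 : ℝ)/5)*W3) (0 : ℝ) (by linear_combination (W3^2 - a^2 + (1 : ℝ)) * hwW3)
  have hm3 := Heval (-(((3 : ℝ)/5)*W3)) (-(((4 : ℝ)/5)*W3)) (0 : ℝ) (by linear_combination (W3^2 - a^2 + (1 : ℝ)) * hwW3)
  have hA3 : ((((36 : ℝ)/25) * a^2 + ((36 : ℝ)/25)) * p100 + (((48 : ℝ)/25) * a^2 + ((48 : ℝ)/25)) * p010 + (((48 : ℝ)/25) * a^2 + ((48 : ℝ)/25)) * q100 + (((64 : ℝ)/25) * a^2 + ((64 : ℝ)/25)) * q010) = 0 := by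
    linear_combination ((1:ℝ)/2) * hp3 + ((1:ℝ)/2) * hm3 - (((((36 : ℝ)/25)) * p100 + (((36 : ℝ)/25)) * p100 * W3^2 + (((48 : ℝ)/25)) * p010 + (((48 : ℝ)/25)) * p010 * W3^2 + (((48 : ℝ)/25)) * q100 + (((48 : ℝ)/25)) * q100 * W3^2 + (((64 : ℝ)/25)) * q010 + (((64 : ℝ)/25)) * q010 * W3^2)) * hwW3
  have hBW3 : W3 * (((((12 : ℝ)/5)) * p000 + (((108 : ℝ)/125) * a^2 + ((108 : ℝ)/125)) * p200 + (((144 : ℝ)/125) * a^2 + ((144 : ℝ)/125)) * p110 + (((192 : ℝ)/125) * a^2 + ((192 : ℝ)/125)) * p020 + (((16 : ℝ)/5)) * q000 + (((144 : ℝ)/125) * a^2 + ((144 : ℝ)/125)) * q200 + (((192 : ℝ)/125) * a^2 + ((192 : ℝ)/125)) * q110 + (((256 : ℝ)/125) * a^2 + ((256 : ℝ)/125)) * q020)) = 0 := by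
    linear_combination ((1:ℝ)/2) * hp3 - ((1:ℝ)/2) * hm3 - (((((12 : ℝ)/5)) * p000 * W3 + (((108 : ℝ)/125)) * p200 * W3 + (((108 : ℝ)/125)) * p200 * W3^3 + (((144 : ℝ)/125)) * p110 * W3 + (((144 : ℝ)/125)) * p110 * W3^3 + (((192 : ℝ)/125)) * p020 * W3 + (((192 : ℝ)/125)) * p020 * W3^3 + (((16 : ℝ)/5)) * q000 * W3 + (((144 : ℝ)/125)) * q200 * W3 + (((144 : ℝ)/125)) * q200 * W3^3 + (((192 : ℝ)/125)) * q110 * W3 + (((192 : ℝ)/125)) * q110 * W3^3 + (((256 : ℝ)/125)) * q020 * W3 + (((256 : ℝ)/125)) * q020 * W3^3)) * hwW3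
  have hB3 : ((((12 : ℝ)/5)) * p000 + (((108 : ℝ)/125) * a^2 + ((108 : ℝ)/125)) * p200 + (((144 : ℝ)/125) * a^2 + ((144 : ℝ)/125)) * p110 + (((192 : ℝ)/125) * a^2 + ((192 : ℝ)/125)) * p020 + (((16 : ℝ)/5)) * q000 + (((144 : ℝ)/125) * a^2 + ((144 : ℝ)/125)) * q200 + (((192 : ℝ)/125) * a^2 + ((192 : ℝ)/125)) * q110 + (((256 : ℝ)/125) * a^2 + ((256 : ℝ)/125)) * q020) = 0 :=
    (mul_eq_zero.mp hBW3).resolve_left (ne_of_gt hwW3pos)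
  have hp4 := Heval (((4 : ℝ)/5)*W3) (((3 : ℝ)/5)*W3) (0 : ℝ) (by linear_combination (W3^2 - a^2 + (1 : ℝ)) * hwW3)
  have hm4 := Heval (-(((4 : ℝ)/5)*W3)) (-(((3 : ℝ)/5)*W3)) (0 : ℝ) (by linear_combination (W3^2 - a^2 + (1 : ℝ)) * hwW3)
  have hBW4 : W3 * (((((16 : ℝ)/5)) * p000 + (((256 : ℝ)/125) * a^2 + ((256 : ℝ)/125)) * p200 + (((192 : ℝ)/125) * a^2 + ((192 : ℝ)/125)) * p110 + (((144 : ℝ)/125) * a^2 + ((144 : ℝ)/125)) * p020 + (((12 : ℝ)/5)) * q000 + (((192 : ℝ)/125) * a^2 + ((192 : ℝ)/125)) * q200 + (((144 : ℝ)/125) * a^2 + ((144 : ℝ)/125)) * q110 + (((108 : ℝ)/125) * a^2 + ((108 : ℝ)/125)) * q020)) = 0 := by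
    linear_combination ((1:ℝ)/2) * hp4 - ((1:ℝ)/2) * hm4 - (((((16 : ℝ)/5)) * p000 * W3 + (((256 : ℝ)/125)) * p200 * W3 + (((256 : ℝ)/125)) * p200 * W3^3 + (((192 : ℝ)/125)) * p110 * W3 + (((192 : ℝ)/125)) * p110 * W3^3 + (((144 : ℝ)/125)) * p020 * W3 + (((144 : ℝ)/125)) * p020 * W3^3 + (((12 : ℝ)/5)) * q000 * W3 + (((192 : ℝ)/125)) * q200 * W3 + (((192 : ℝ)/125)) * q200 * W3^3 + (((144 : ℝ)/125)) * q110 * W3 + (((144 : ℝ)/125)) * q110 * W3^3 + (((108 : ℝ)/125)) * q020 * W3 + (((108 : ℝ)/125)) * q020 * W3^3)) * hwW3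
  have hB4 : ((((16 : ℝ)/5)) * p000 + (((256 : ℝ)/125) * a^2 + ((256 : ℝ)/125)) * p200 + (((192 : ℝ)/125) * a^2 + ((192 : ℝ)/125)) * p110 + (((144 : ℝ)/125) * a^2 + ((144 : ℝ)/125)) * p020 + (((12 : ℝ)/5)) * q000 + (((192 : ℝ)/125) * a^2 + ((192 : ℝ)/125)) * q200 + (((144 : ℝ)/125) * a^2 + ((144 : ℝ)/125)) * q110 + (((108 : ℝ)/125) * a^2 + ((108 : ℝ)/125)) * q020) = 0 :=
    (mul_eq_zero.mp hBW4).resolve_left (ne_of_gt hwW3pos)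
  have hp5 := Heval ((1 : ℝ)*W4) ((0 : ℝ)*W4) (0 : ℝ) (by linear_combination (W4^2 - a^2 + (-1 : ℝ)) * hwW4)
  have hm5 := Heval (-((1 : ℝ)*W4)) (-((0 : ℝ)*W4)) (0 : ℝ) (by linear_combination (W4^2 - a^2 + (-1 : ℝ)) * hwW4)
  have hBW5 : W4 * ((((-4 : ℝ)) * p000 + ((-4 : ℝ) * a^2 + (4 : ℝ)) * p200)) = 0 := by
    linear_combination ((1:ℝ)/2) * hp5 - ((1:ℝ)/2) * hm5 - ((((4 : ℝ)) * p000 * W4 + ((-4 : ℝ)) * p200 * W4 + ((4 : ℝ)) * p200 * W4^3)) * hwW4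
  have hB5 : (((-4 : ℝ)) * p000 + ((-4 : ℝ) * a^2 + (4 : ℝ)) * p200) = 0 :=
    (mul_eq_zero.mp hBW5).resolve_left (ne_of_gt hwW4pos)
  have hp6 := Heval ((0 : ℝ)*W4) ((1 : ℝ)*W4) (0 : ℝ) (by linear_combination (W4^2 - a^2 + (-1 : ℝ)) * hwW4)
  have hm6 := Heval (-((0 : ℝ)*W4)) (-((1 : ℝ)*W4)) (0 : ℝ) (by linear_combination (W4^2 - a^2 + (-1 : ℝ)) * hwW4)
  have hBW6 : W4 * ((((-4 : ℝ)) * q000 + ((-4 : ℝ) * a^2 + (4 : ℝ)) * q020)) = 0 := by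
    linear_combination ((1:ℝ)/2) * hp6 - ((1:ℝ)/2) * hm6 - ((((4 : ℝ)) * q000 * W4 + ((-4 : ℝ)) * q020 * W4 + ((4 : ℝ)) * q020 * W4^3)) * hwW4
  have hB6 : (((-4 : ℝ)) * q000 + ((-4 : ℝ) * a^2 + (4 : ℝ)) * q020) = 0 :=
    (mul_eq_zero.mp hBW6).resolve_left (ne_of_gt hwW4pos)
  have hp9 := Heval ((1 : ℝ)*W1) ((0 : ℝ)*W1) ((4 : ℝ)/5) (by linear_combination (W1^2 - a^2 + ((3 : ℝ)/5)) * hwW1)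
  have hm9 := Heval (-((1 : ℝ)*W1)) (-((0 : ℝ)*W1)) ((4 : ℝ)/5) (by linear_combination (W1^2 - a^2 + ((3 : ℝ)/5)) * hwW1)
  have hA9 : ((((12 : ℝ)/5) * a^2 + ((36 : ℝ)/25)) * p100 + (((48 : ℝ)/25) * a^2 + ((144 : ℝ)/125)) * p101 + (((8 : ℝ)/5)) * r000 + (((32 : ℝ)/25)) * r001 + (((8 : ℝ)/5) * a^2 + ((24 : ℝ)/25)) * r200 + (((128 : ℝ)/125)) * r002) = 0 := by
    linear_combination ((1:ℝ)/2) * hp9 + ((1:ℝ)/2) * hm9 - (((((12 : ℝ)/5)) * p100 + ((4 : ℝ)) * p100 * W1^2 + (((48 : ℝ)/25)) * p101 + (((16 : ℝ)/5)) * p101 * W1^2 + (((8 : ℝ)/5)) * r200)) * hwW1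
  have hBW9 : W1 * (((((12 : ℝ)/5)) * p000 + (((48 : ℝ)/25)) * p001 + (((12 : ℝ)/5) * a^2 + ((36 : ℝ)/25)) * p200 + (((192 : ℝ)/125)) * p002 + (((8 : ℝ)/5)) * r100 + (((32 : ℝ)/25)) * r101)) = 0 := by
    linear_combination ((1:ℝ)/2) * hp9 - ((1:ℝ)/2) * hm9 - ((((4 : ℝ)) * p000 * W1 + (((16 : ℝ)/5)) * p001 * W1 + (((12 : ℝ)/5)) * p200 * W1 + ((4 : ℝ)) * p200 * W1^3 + (((64 : ℝ)/25)) * p002 * W1)) * hwW1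
  have hB9 : ((((12 : ℝ)/5)) * p000 + (((48 : ℝ)/25)) * p001 + (((12 : ℝ)/5) * a^2 + ((36 : ℝ)/25)) * p200 + (((192 : ℝ)/125)) * p002 + (((8 : ℝ)/5)) * r100 + (((32 : ℝ)/25)) * r101) = 0 :=
    (mul_eq_zero.mp hBW9).resolve_left (ne_of_gt hwW1pos)
  have hp10 := Heval ((0 : ℝ)*W1) ((1 : ℝ)*W1) ((4 : ℝ)/5) (by linear_combination (W1^2 - a^2 + ((3 : ℝ)/5)) * hwW1)
  have hm10 := Heval (-((0 : ℝ)*W1)) (-((1 : ℝ)*W1)) ((4 : ℝ)/5) (by linear_combination (W1^2 - a^2 + ((3 : ℝ)/5)) * hwW1)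
  have hA10 : ((((12 : ℝ)/5) * a^2 + ((36 : ℝ)/25)) * q010 + (((48 : ℝ)/25) * a^2 + ((144 : ℝ)/125)) * q011 + (((8 : ℝ)/5)) * r000 + (((32 : ℝ)/25)) * r001 + (((8 : ℝ)/5) * a^2 + ((24 : ℝ)/25)) * r020 + (((128 : ℝ)/125)) * r002) = 0 := by
    linear_combination ((1:ℝ)/2) * hp10 + ((1:ℝ)/2) * hm10 - (((((12 : ℝ)/5)) * q010 + ((4 : ℝ)) * q010 * W1^2 + (((48 : ℝ)/25)) * q011 + (((16 : ℝ)/5)) * q011 * W1^2 + (((8 : ℝ)/5)) * r020)) * hwW1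
  have hBW10 : W1 * (((((12 : ℝ)/5)) * q000 + (((48 : ℝ)/25)) * q001 + (((12 : ℝ)/5) * a^2 + ((36 : ℝ)/25)) * q020 + (((192 : ℝ)/125)) * q002 + (((8 : ℝ)/5)) * r010 + (((32 : ℝ)/25)) * r011)) = 0 := by
    linear_combination ((1:ℝ)/2) * hp10 - ((1:ℝ)/2) * hm10 - ((((4 : ℝ)) * q000 * W1 + (((16 : ℝ)/5)) * q001 * W1 + (((12 : ℝ)/5)) * q020 * W1 + ((4 : ℝ)) * q020 * W1^3 + (((64 : ℝ)/25)) * q002 * W1)) * hwW1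
  have hB10 : ((((12 : ℝ)/5)) * q000 + (((48 : ℝ)/25)) * q001 + (((12 : ℝ)/5) * a^2 + ((36 : ℝ)/25)) * q020 + (((192 : ℝ)/125)) * q002 + (((8 : ℝ)/5)) * r010 + (((32 : ℝ)/25)) * r011) = 0 :=
    (mul_eq_zero.mp hBW10).resolve_left (ne_of_gt hwW1pos)
  have hp11 := Heval (((3 : ℝ)/5)*W1) (((4 : ℝ)/5)*W1) ((4 : ℝ)/5) (by linear_combination (W1^2 - a^2 + ((3 : ℝ)/5)) * hwW1)
  have hm11 := Heval (-(((3 : ℝ)/5)*W1)) (-(((4 : ℝ)/5)*W1)) ((4 : ℝ)/5) (by linear_combination (W1^2 - a^2 + ((3 : ℝ)/5)) * hwW1)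
  have hA11 : ((((108 : ℝ)/125) * a^2 + ((324 : ℝ)/625)) * p100 + (((144 : ℝ)/125) * a^2 + ((432 : ℝ)/625)) * p010 + (((432 : ℝ)/625) * a^2 + ((1296 : ℝ)/3125)) * p101 + (((576 : ℝ)/625) * a^2 + ((1728 : ℝ)/3125)) * p011 + (((144 : ℝ)/125) * a^2 + ((432 : ℝ)/625)) * q100 + (((192 : ℝ)/125) * a^2 + ((576 : ℝ)/625)) * q010 + (((576 : ℝ)/625) * a^2 + ((1728 : ℝ)/3125)) * q101 + (((768 : ℝ)/625) * a^2 + ((2304 : ℝ)/3125)) * q011 + (((8 : ℝ)/5)) * r000 + (((32 : ℝ)/25)) * r001 + (((72 : ℝ)/125) * a^2 + ((216 : ℝ)/625)) * r200 + (((96 : ℝ)/125) * a^2 + ((288 : ℝ)/625)) * r110 + (((128 : ℝ)/125) * a^2 + ((384 : ℝ)/625)) * r020 + (((128 : ℝ)/125)) * r002) = 0 := by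
    linear_combination ((1:ℝ)/2) * hp11 + ((1:ℝ)/2) * hm11 - (((((108 : ℝ)/125)) * p100 + (((36 : ℝ)/25)) * p100 * W1^2 + (((144 : ℝ)/125)) * p010 + (((48 : ℝ)/25)) * p010 * W1^2 + (((432 : ℝ)/625)) * p101 + (((144 : ℝ)/125)) * p101 * W1^2 + (((576 : ℝ)/625)) * p011 + (((192 : ℝ)/125)) * p011 * W1^2 + (((144 : ℝ)/125)) * q100 + (((48 : ℝ)/25)) * q100 * W1^2 + (((192 : ℝ)/125)) * q010 + (((64 : ℝ)/25)) * q010 * W1^2 + (((576 : ℝ)/625)) * q101 + (((192 : ℝ)/125)) * q101 * W1^2 + (((768 : ℝ)/625)) * q011 + (((256 : ℝ)/125)) * q011 * W1^2 + (((72 : ℝ)/125)) * r200 + (((96 : ℝ)/125)) * r110 + (((128 : ℝ)/125)) * r020)) * hwW1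
  have hp13 := Heval ((1 : ℝ)*W1) ((0 : ℝ)*W1) ((-4 : ℝ)/5) (by linear_combination (W1^2 - a^2 + ((3 : ℝ)/5)) * hwW1)
  have hm13 := Heval (-((1 : ℝ)*W1)) (-((0 : ℝ)*W1)) ((-4 : ℝ)/5) (by linear_combination (W1^2 - a^2 + ((3 : ℝ)/5)) * hwW1)
  have hBW13 : W1 * (((((12 : ℝ)/5)) * p000 + (((-48 : ℝ)/25)) * p001 + (((12 : ℝ)/5) * a^2 + ((36 : ℝ)/25)) * p200 + (((192 : ℝ)/125)) * p002 + (((-8 : ℝ)/5)) * r100 + (((32 : ℝ)/25)) * r101)) = 0 := by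
    linear_combination ((1:ℝ)/2) * hp13 - ((1:ℝ)/2) * hm13 - ((((4 : ℝ)) * p000 * W1 + (((-16 : ℝ)/5)) * p001 * W1 + (((12 : ℝ)/5)) * p200 * W1 + ((4 : ℝ)) * p200 * W1^3 + (((64 : ℝ)/25)) * p002 * W1)) * hwW1
  have hB13 : ((((12 : ℝ)/5)) * p000 + (((-48 : ℝ)/25)) * p001 + (((12 : ℝ)/5) * a^2 + ((36 : ℝ)/25)) * p200 + (((192 : ℝ)/125)) * p002 + (((-8 : ℝ)/5)) * r100 + (((32 : ℝ)/25)) * r101) = 0 :=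
    (mul_eq_zero.mp hBW13).resolve_left (ne_of_gt hwW1pos)
  have hp14 := Heval ((0 : ℝ)*W1) ((1 : ℝ)*W1) ((-4 : ℝ)/5) (by linear_combination (W1^2 - a^2 + ((3 : ℝ)/5)) * hwW1)
  have hm14 := Heval (-((0 : ℝ)*W1)) (-((1 : ℝ)*W1)) ((-4 : ℝ)/5) (by linear_combination (W1^2 - a^2 + ((3 : ℝ)/5)) * hwW1)
  have hBW14 : W1 * (((((12 : ℝ)/5)) * q000 + (((-48 : ℝ)/25)) * q001 + (((12 : ℝ)/5) * a^2 + ((36 : ℝ)/25)) * q020 + (((192 : ℝ)/125)) * q002 + (((-8 : ℝ)/5)) * r010 + (((32 : ℝ)/25)) * r011)) = 0 := by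
    linear_combination ((1:ℝ)/2) * hp14 - ((1:ℝ)/2) * hm14 - ((((4 : ℝ)) * q000 * W1 + (((-16 : ℝ)/5)) * q001 * W1 + (((12 : ℝ)/5)) * q020 * W1 + ((4 : ℝ)) * q020 * W1^3 + (((64 : ℝ)/25)) * q002 * W1)) * hwW1
  have hB14 : ((((12 : ℝ)/5)) * q000 + (((-48 : ℝ)/25)) * q001 + (((12 : ℝ)/5) * a^2 + ((36 : ℝ)/25)) * q020 + (((192 : ℝ)/125)) * q002 + (((-8 : ℝ)/5)) * r010 + (((32 : ℝ)/25)) * r011) = 0 :=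
    (mul_eq_zero.mp hBW14).resolve_left (ne_of_gt hwW1pos)
  have hp17 := Heval ((1 : ℝ)*W2) ((0 : ℝ)*W2) ((4 : ℝ)/5) (by linear_combination (W2^2 - a^2 + ((-3 : ℝ)/5)) * hwW2)
  have hm17 := Heval (-((1 : ℝ)*W2)) (-((0 : ℝ)*W2)) ((4 : ℝ)/5) (by linear_combination (W2^2 - a^2 + ((-3 : ℝ)/5)) * hwW2)
  have hA17 : ((((-12 : ℝ)/5) * a^2 + ((36 : ℝ)/25)) * p100 + (((-48 : ℝ)/25) * a^2 + ((144 : ℝ)/125)) * p101 + (((8 : ℝ)/5)) * r000 + (((32 : ℝ)/25)) * r001 + (((8 : ℝ)/5) * a^2 + ((-24 : ℝ)/25)) * r200 + (((128 : ℝ)/125)) * r002) = 0 := by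
    linear_combination ((1:ℝ)/2) * hp17 + ((1:ℝ)/2) * hm17 - (((((-12 : ℝ)/5)) * p100 + ((4 : ℝ)) * p100 * W2^2 + (((-48 : ℝ)/25)) * p101 + (((16 : ℝ)/5)) * p101 * W2^2 + (((8 : ℝ)/5)) * r200)) * hwW2
  have hBW17 : W2 * (((((-12 : ℝ)/5)) * p000 + (((-48 : ℝ)/25)) * p001 + (((-12 : ℝ)/5) * a^2 + ((36 : ℝ)/25)) * p200 + (((-192 : ℝ)/125)) * p002 + (((8 : ℝ)/5)) * r100 + (((32 : ℝ)/25)) * r101)) = 0 := by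
    linear_combination ((1:ℝ)/2) * hp17 - ((1:ℝ)/2) * hm17 - ((((4 : ℝ)) * p000 * W2 + (((16 : ℝ)/5)) * p001 * W2 + (((-12 : ℝ)/5)) * p200 * W2 + ((4 : ℝ)) * p200 * W2^3 + (((64 : ℝ)/25)) * p002 * W2)) * hwW2
  have hB17 : ((((-12 : ℝ)/5)) * p000 + (((-48 : ℝ)/25)) * p001 + (((-12 : ℝ)/5) * a^2 + ((36 : ℝ)/25)) * p200 + (((-192 : ℝ)/125)) * p002 + (((8 : ℝ)/5)) * r100 + (((32 : ℝ)/25)) * r101) = 0 :=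
    (mul_eq_zero.mp hBW17).resolve_left (ne_of_gt hwW2pos)
  have hp18 := Heval ((0 : ℝ)*W2) ((1 : ℝ)*W2) ((4 : ℝ)/5) (by linear_combination (W2^2 - a^2 + ((-3 : ℝ)/5)) * hwW2)
  have hm18 := Heval (-((0 : ℝ)*W2)) (-((1 : ℝ)*W2)) ((4 : ℝ)/5) (by linear_combination (W2^2 - a^2 + ((-3 : ℝ)/5)) * hwW2)
  have hA18 : ((((-12 : ℝ)/5) * a^2 + ((36 : ℝ)/25)) * q010 + (((-48 : ℝ)/25) * a^2 + ((144 : ℝ)/125)) * q011 + (((8 : ℝ)/5)) * r000 + (((32 : ℝ)/25)) * r001 + (((8 : ℝ)/5) * a^2 + ((-24 : ℝ)/25)) * r020 + (((128 : ℝ)/125)) * r002) = 0 := by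
    linear_combination ((1:ℝ)/2) * hp18 + ((1:ℝ)/2) * hm18 - (((((-12 : ℝ)/5)) * q010 + ((4 : ℝ)) * q010 * W2^2 + (((-48 : ℝ)/25)) * q011 + (((16 : ℝ)/5)) * q011 * W2^2 + (((8 : ℝ)/5)) * r020)) * hwW2
  have T1' : ((1 : ℝ) * a) * ((((1 : ℝ)) * r100)) = 0 := by
    linear_combination ((((1 : ℝ)/10))) * hE1 + ((((2 : ℝ)/5))) * hE2 + ((((-1 : ℝ)/2))) * hE3 + ((((1 : ℝ)/10))) * hE4 + ((((2 : ℝ)/5))) * hE5 + ((((-1 : ℝ)/2))) * hE6 + ((((-9 : ℝ)/80) * a)) * hB1 + ((((-9 : ℝ)/80) * a)) * hB5 + ((((5 : ℝ)/16) * a)) * hB9 + ((((5 : ℝ)/16) * a)) * hB17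
  have T1 : (((1 : ℝ)) * r100) = 0 :=
    (mul_eq_zero.mp T1').resolve_left (ne_of_gt hden1)
  have T2' : ((1 : ℝ) * a^5 + ((-9 : ℝ)/25) * a) * ((((1 : ℝ)) * r010)) = 0 := by
    linear_combination ((((-3 : ℝ)/20) * a^4 + ((27 : ℝ)/500))) * hE1 + ((((13 : ℝ)/20) * a^4 + ((-117 : ℝ)/500))) * hE2 + ((((-1 : ℝ)/2) * a^4 + ((9 : ℝ)/50))) * hE3 + ((((7 : ℝ)/20) * a^4 + ((-63 : ℝ)/500))) * hE4 + ((((3 : ℝ)/20) * a^4 + ((-27 : ℝ)/500))) * hE5 + ((((-1 : ℝ)/2) * a^4 + ((9 : ℝ)/50))) * hE6 + ((((-9 : ℝ)/80) * a^5 + ((81 : ℝ)/2000) * a)) * hB1 + ((((-9 : ℝ)/80) * a^5 + ((81 : ℝ)/2000) * a)) * hB5 + ((((5 : ℝ)/16) * a^4 + ((-3 : ℝ)/16) * a^2)) * hA9 + ((((5 : ℝ)/16) * a^5 + ((-9 : ℝ)/80) * a)) * hB9 + ((((-5 : ℝ)/16) * a^4 + ((3 : ℝ)/16) * a^2)) *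 hA10 + ((((5 : ℝ)/16) * a^4 + ((3 : ℝ)/16) * a^2)) * hA17 + ((((5 : ℝ)/16) * a^5 + ((-9 : ℝ)/80) * a)) * hB17 + ((((-5 : ℝ)/16) * a^4 + ((-3 : ℝ)/16) * a^2)) * hA18
  have T2 : (((1 : ℝ)) * r010) = 0 :=
    (mul_eq_zero.mp T2').resolve_left (ne_of_gt hden2)
  have T3' : ((1 : ℝ) * a) * ((((1 : ℝ)) * r101)) = 0 := by
    linear_combination ((((-1 : ℝ)/8))) * hE1 + ((((-1 : ℝ)/2))) * hE2 + ((((5 : ℝ)/8))) * hE3 + ((((-1 : ℝ)/8))) * hE4 + ((((-1 : ℝ)/2))) * hE5 + ((((5 : ℝ)/8))) * hE6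
  have T3 : (((1 : ℝ)) * r101) = 0 :=
    (mul_eq_zero.mp T3').resolve_left (ne_of_gt hden1)
  have T4' : ((1 : ℝ) * a) * ((((1 : ℝ)) * r011)) = 0 := by
    linear_combination ((((-3 : ℝ)/8))) * hE1 + ((((-1 : ℝ)/4))) * hE2 + ((((5 : ℝ)/8))) * hE3 + ((((-3 : ℝ)/8))) * hE4 + ((((-1 : ℝ)/4))) * hE5 + ((((5 : ℝ)/8))) * hE6
  have T4 : (((1 : ℝ)) * r011) = 0 :=
    (mul_eq_zero.mp T4').resolve_left (ne_of_gt hden1)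
  have T5 : (((1 : ℝ)) * r001) = 0 := by
    linear_combination ((((3 : ℝ)/8))) * hE1 + ((((1 : ℝ)/2))) * hE2 + ((((-5 : ℝ)/8))) * hE3 + ((((3 : ℝ)/8))) * hE4 + ((((1 : ℝ)/2))) * hE5 + ((((-5 : ℝ)/8))) * hE6
  have T6' : ((1 : ℝ) * a^4 + ((-9 : ℝ)/25)) * ((((1 : ℝ)) * r200 + ((-1 : ℝ)) * r020)) = 0 := by
    linear_combination ((((5 : ℝ)/16) * a^2 + ((-3 : ℝ)/16))) * hA9 + ((((-5 : ℝ)/16) * a^2 + ((3 : ℝ)/16))) * hA10 + ((((5 : ℝ)/16) * a^2 + ((3 : ℝ)/16))) * hA17 + ((((-5 : ℝ)/16) * a^2 + ((-3 : ℝ)/16))) * hA18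
  have T6 : (((1 : ℝ)) * r200 + ((-1 : ℝ)) * r020) = 0 :=
    (mul_eq_zero.mp T6').resolve_left (ne_of_gt hden3)
  have T7' : ((1 : ℝ) * a^6 + ((-9 : ℝ)/25) * a^2) * ((((1 : ℝ)) * r110)) = 0 := by
    linear_combination ((((-3 : ℝ)/16) * a^4 + ((27 : ℝ)/400))) * hE1 + ((((-3 : ℝ)/4) * a^4 + ((27 : ℝ)/100))) * hE2 + ((((15 : ℝ)/16) * a^4 + ((-27 : ℝ)/80))) * hE3 + ((((1 : ℝ)/48) * a^4 + ((-3 : ℝ)/400))) * hE4 + ((((1 : ℝ)/12) * a^4 + ((-3 : ℝ)/100))) * hE5 + ((((-5 : ℝ)/48) * a^4 + ((3 : ℝ)/80))) * hE6 + ((((3 : ℝ)/32) * a^5 + ((-27 : ℝ)/800) * a)) * hB1 + ((((3 : ℝ)/32) * a^5 + ((-27 : ℝ)/800) * a)) * hB5 + ((((-5 : ℝ)/48) * a^4 + ((1 : ℝ)/16) * a^2)) * hA9 + ((((-25 : ℝ)/96) * a^5 + ((3 : ℝ)/32) * a)) * hB9 + ((((5 : ℝ)/48) * a^4 + ((-1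 : ℝ)/16) * a^2)) * hA10 + ((((-5 : ℝ)/48) * a^4 + ((-1 : ℝ)/16) * a^2)) * hA17 + ((((-25 : ℝ)/96) * a^5 + ((3 : ℝ)/32) * a)) * hB17 + ((((5 : ℝ)/48) * a^4 + ((1 : ℝ)/16) * a^2)) * hA18
  have T7 : (((1 : ℝ)) * r110) = 0 :=
    (mul_eq_zero.mp T7').resolve_left (ne_of_gt hden4)
  have T8 : (((1 : ℝ)) * r000 + ((1 : ℝ) * a^2) * r200 + ((1 : ℝ)) * r002) = 0 := by
    linear_combination ((((3 : ℝ)/20))) * hE1 + ((((-2 : ℝ)/5))) * hE2 + ((((1 : ℝ)/2))) * hE3 + ((((-7 : ℝ)/20))) * hE4 + ((((-2 : ℝ)/5))) * hE5 + ((((1 : ℝ)/2))) * hE6 + ((((9 : ℝ)/80) * a)) * hB1 + ((((9 : ℝ)/80) * a)) * hB5 + ((((-5 : ℝ)/16) * a)) * hB9 + ((((-5 : ℝ)/16) * a)) * hB17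
  have T9' : ((1 : ℝ) * a^2 + (1 : ℝ)) * ((((1 : ℝ)) * p100)) = 0 := by
    linear_combination ((((1 : ℝ)/4))) * hA1
  have T9 : (((1 : ℝ)) * p100) = 0 :=
    (mul_eq_zero.mp T9').resolve_left (ne_of_gt hden5)
  have T10' : ((1 : ℝ) * a^2 + (1 : ℝ)) * ((((1 : ℝ)) * q010)) = 0 := by
    linear_combination ((((1 : ℝ)/4))) * hA2
  have T10 : (((1 : ℝ)) * q010) = 0 :=
    (mul_eq_zero.mp T10').resolve_left (ne_of_gt hden5)
  have T11' : ((1 : ℝ) * a^2 + (1 : ℝ)) * ((((1 : ℝ)) * p010 + ((1 : ℝ)) * q100)) = 0 := by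
    linear_combination ((((-3 : ℝ)/16))) * hA1 + ((((-1 : ℝ)/3))) * hA2 + ((((25 : ℝ)/48))) * hA3
  have T11 : (((1 : ℝ)) * p010 + ((1 : ℝ)) * q100) = 0 :=
    (mul_eq_zero.mp T11').resolve_left (ne_of_gt hden5)
  have T12 : (((1 : ℝ)) * p200) = 0 := by
    linear_combination ((((1 : ℝ)/8))) * hB1 + ((((1 : ℝ)/8))) * hB5
  have T13 : (((1 : ℝ)) * q020) = 0 := by
    linear_combination ((((1 : ℝ)/8))) * hB2 + ((((1 : ℝ)/8))) * hB6
  have T14' : ((1 : ℝ) * a^2 + (1 : ℝ)) * ((((1 : ℝ)) * p110 + ((1 : ℝ)) * q200)) = 0 := by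
    linear_combination ((((-25 : ℝ)/48))) * hB1 + ((((1 : ℝ)/8) * a^2 + ((1 : ℝ)/8))) * hB2 + ((((-125 : ℝ)/112))) * hB3 + ((((125 : ℝ)/84))) * hB4 + ((((1 : ℝ)/8) * a^2 + ((1 : ℝ)/8))) * hB6
  have T14 : (((1 : ℝ)) * p110 + ((1 : ℝ)) * q200) = 0 :=
    (mul_eq_zero.mp T14').resolve_left (ne_of_gt hden5)
  have T15' : ((1 : ℝ) * a^2 + (1 : ℝ)) * ((((1 : ℝ)) * p020 + ((1 : ℝ)) * q110)) = 0 := by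
    linear_combination ((((1 : ℝ)/8) * a^2 + ((1 : ℝ)/8))) * hB1 + ((((-25 : ℝ)/48))) * hB2 + ((((125 : ℝ)/84))) * hB3 + ((((-125 : ℝ)/112))) * hB4 + ((((1 : ℝ)/8) * a^2 + ((1 : ℝ)/8))) * hB5
  have T15 : (((1 : ℝ)) * p020 + ((1 : ℝ)) * q110) = 0 :=
    (mul_eq_zero.mp T15').resolve_left (ne_of_gt hden5)
  have T16 : (((1 : ℝ)) * p000) = 0 := by
    linear_combination ((((-1 : ℝ)/8) * a^2 + ((1 : ℝ)/8))) * hB1 + ((((-1 : ℝ)/8) * a^2 + ((-1 : ℝ)/8))) * hB5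
  have T17 : (((1 : ℝ)) * q000) = 0 := by
    linear_combination ((((-1 : ℝ)/8) * a^2 + ((1 : ℝ)/8))) * hB2 + ((((-1 : ℝ)/8) * a^2 + ((-1 : ℝ)/8))) * hB6
  have T18' : ((1 : ℝ) * a^2 + (1 : ℝ)) * ((((2 : ℝ)) * p101 + ((-1 : ℝ)) * r002)) = 0 := by
    linear_combination ((((-5 : ℝ)/4) * a^2 + ((-5 : ℝ)/4))) * hE1 + ((((5 : ℝ)/36) * a^2 + ((5 : ℝ)/36))) * hE4 + ((((-5 : ℝ)/8))) * hA1 + ((((-5 : ℝ)/16) * a^3 + ((-5 : ℝ)/16) * a)) * hB1 + ((((-5 : ℝ)/16) * a^3 + ((-5 : ℝ)/16) * a)) * hB5 + ((((125 : ℝ)/144) * a^2 + ((125 : ℝ)/144))) * hA9 + ((((125 : ℝ)/144) * a^3 + ((125 : ℝ)/144) * a)) * hB9 + ((((125 : ℝ)/144) * a^2 + ((125 : ℝ)/144))) * hA17 + ((((125 : ℝ)/144) * a^3 + ((125 : ℝ)/144) * a)) * hB17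
  have T18 : (((2 : ℝ)) * p101 + ((-1 : ℝ)) * r002) = 0 :=
    (mul_eq_zero.mp T18').resolve_left (ne_of_gt hden5)
  have T19 : (((1 : ℝ)) * r200 + ((1 : ℝ) * a^2) * r002) = 0 := by
    linear_combination ((((5 : ℝ)/4) * a^2)) * hE1 + ((((-5 : ℝ)/36) * a^2)) * hE4 + ((((5 : ℝ)/16) * a^3)) * hB1 + ((((5 : ℝ)/16) * a^3)) * hB5 + ((((-125 : ℝ)/144) * a^2 + ((25 : ℝ)/48))) * hA9 + ((((-125 : ℝ)/144) * a^3)) * hB9 + ((((-125 : ℝ)/144) * a^2 + ((-25 : ℝ)/48))) * hA17 + ((((-125 : ℝ)/144) * a^3)) * hB17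
  have T20' : ((1 : ℝ) * a^6 + (1 : ℝ) * a^4 + ((-9 : ℝ)/25) * a^2 + ((-9 : ℝ)/25)) * ((((2 : ℝ)) * q011 + ((-1 : ℝ)) * r002)) = 0 := by
    linear_combination ((((-5 : ℝ)/4) * a^6 + ((-5 : ℝ)/4) * a^4 + ((9 : ℝ)/20) * a^2 + ((9 : ℝ)/20))) * hE1 + ((((5 : ℝ)/36) * a^6 + ((5 : ℝ)/36) * a^4 + ((-1 : ℝ)/20) * a^2 + ((-1 : ℝ)/20))) * hE4 + ((((-5 : ℝ)/16) * a^7 + ((-5 : ℝ)/16) * a^5 + ((9 : ℝ)/80) * a^3 + ((9 : ℝ)/80) * a)) * hB1 + ((((-5 : ℝ)/8) * a^4 + ((9 : ℝ)/40))) * hA2 + ((((-5 : ℝ)/16) * a^7 + ((-5 : ℝ)/16) * a^5 + ((9 : ℝ)/80) * a^3 + ((9 : ℝ)/80) * a)) * hB5 + ((((125 : ℝ)/144) * a^6 + ((25 : ℝ)/72) * a^4 + ((-25 : ℝ)/48) * a^2)) * hA9 + ((((125 : ℝ)/144) * a^7 + ((125 : ℝ)/144) * a^5 + ((-5 : ℝ)/16)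 * a^3 + ((-5 : ℝ)/16) * a)) * hB9 + ((((25 : ℝ)/48) * a^4 + ((5 : ℝ)/24) * a^2 + ((-5 : ℝ)/16))) * hA10 + ((((125 : ℝ)/144) * a^6 + ((25 : ℝ)/18) * a^4 + ((25 : ℝ)/48) * a^2)) * hA17 + ((((125 : ℝ)/144) * a^7 + ((125 : ℝ)/144) * a^5 + ((-5 : ℝ)/16) * a^3 + ((-5 : ℝ)/16) * a)) * hB17 + ((((-25 : ℝ)/48) * a^4 + ((-5 : ℝ)/6) * a^2 + ((-5 : ℝ)/16))) * hA18
  have T20 : (((2 : ℝ)) * q011 + ((-1 : ℝ)) * r002) = 0 :=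
    (mul_eq_zero.mp T20').resolve_left (ne_of_gt hden6)
  have T21' : ((1 : ℝ) * a^8 + (1 : ℝ) * a^6 + ((-9 : ℝ)/25) * a^4 + ((-9 : ℝ)/25) * a^2) * ((((1 : ℝ)) * p011 + ((1 : ℝ)) * q101)) = 0 := by
    linear_combination ((((5 : ℝ)/32) * a^6 + ((5 : ℝ)/32) * a^4 + ((-9 : ℝ)/160) * a^2 + ((-9 : ℝ)/160))) * hE1 + ((((5 : ℝ)/8) * a^6 + ((5 : ℝ)/8) * a^4 + ((-9 : ℝ)/40) * a^2 + ((-9 : ℝ)/40))) * hE2 + ((((-25 : ℝ)/32) * a^6 + ((-25 : ℝ)/32) * a^4 + ((9 : ℝ)/32) * a^2 + ((9 : ℝ)/32))) * hE3 + ((((-5 : ℝ)/288) * a^6 + ((-5 : ℝ)/288) * a^4 + ((1 : ℝ)/160) * a^2 + ((1 : ℝ)/160))) * hE4 + ((((-5 : ℝ)/72) * a^6 + ((-5 : ℝ)/72) * a^4 + ((1 : ℝ)/40) * a^2 + ((1 : ℝ)/40))) * hE5 + ((((25 : ℝ)/288) * a^6 + ((25 : ℝ)/288) * a^4 + ((-1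 : ℝ)/32) * a^2 + ((-1 : ℝ)/32))) * hE6 + ((((15 : ℝ)/64) * a^6 + ((-27 : ℝ)/320) * a^2)) * hA1 + ((((-5 : ℝ)/64) * a^7 + ((-5 : ℝ)/64) * a^5 + ((9 : ℝ)/320) * a^3 + ((9 : ℝ)/320) * a)) * hB1 + ((((5 : ℝ)/12) * a^6 + ((-3 : ℝ)/20) * a^2)) * hA2 + ((((-125 : ℝ)/192) * a^6 + ((15 : ℝ)/64) * a^2)) * hA3 + ((((-5 : ℝ)/64) * a^7 + ((-5 : ℝ)/64) * a^5 + ((9 : ℝ)/320) * a^3 + ((9 : ℝ)/320) * a)) * hB5 + ((((-175 : ℝ)/576) * a^6 + ((-35 : ℝ)/288) * a^4 + ((35 : ℝ)/192) * a^2)) * hA9 + ((((125 : ℝ)/576) * a^7 + ((125 : ℝ)/576) * a^5 + ((-5 : ℝ)/64) * a^3 + ((-5 : ℝ)/64) * a)) * hB9 + ((((-25 : ℝ)/32) * a^6 + ((-5 : ℝ)/16) * a^4 + ((15 : ℝ)/32) * a^2)) * hA10 + ((((625 : ℝ)/576) * a^6 + ((125 : ℝ)/288) * a^4 + ((-125 :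 ℝ)/192) * a^2)) * hA11 + ((((25 : ℝ)/288) * a^6 + ((5 : ℝ)/36) * a^4 + ((5 : ℝ)/96) * a^2)) * hA17 + ((((125 : ℝ)/576) * a^7 + ((125 : ℝ)/576) * a^5 + ((-5 : ℝ)/64) * a^3 + ((-5 : ℝ)/64) * a)) * hB17 + ((((-25 : ℝ)/288) * a^6 + ((-5 : ℝ)/36) * a^4 + ((-5 : ℝ)/96) * a^2)) * hA18
  have T21 : (((1 : ℝ)) * p011 + ((1 : ℝ)) * q101) = 0 :=
    (mul_eq_zero.mp T21').resolve_left (ne_of_gt hden7)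
  have T22' : ((1 : ℝ) * a) * ((((1 : ℝ)) * p001)) = 0 := by
    linear_combination ((((-1 : ℝ)/12))) * hE1 + ((((-1 : ℝ)/3))) * hE2 + ((((5 : ℝ)/12))) * hE3 + ((((-1 : ℝ)/12))) * hE4 + ((((-1 : ℝ)/3))) * hE5 + ((((5 : ℝ)/12))) * hE6 + ((((3 : ℝ)/32) * a)) * hB1 + ((((3 : ℝ)/32) * a)) * hB5 + ((((-25 : ℝ)/96) * a)) * hB13 + ((((-25 : ℝ)/96) * a)) * hB17
  have T22 : (((1 : ℝ)) * p001) = 0 :=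
    (mul_eq_zero.mp T22').resolve_left (ne_of_gt hden1)
  have T23' : ((1 : ℝ) * a) * ((((1 : ℝ)) * p002)) = 0 := by
    linear_combination ((((5 : ℝ)/48))) * hE1 + ((((5 : ℝ)/12))) * hE2 + ((((-25 : ℝ)/48))) * hE3 + ((((5 : ℝ)/48))) * hE4 + ((((5 : ℝ)/12))) * hE5 + ((((-25 : ℝ)/48))) * hE6 + ((((-5 : ℝ)/16) * a)) * hB1 + ((((5 : ℝ)/64) * a)) * hB5 + ((((125 : ℝ)/384) * a)) * hB9 + ((((125 : ℝ)/384) * a)) * hB13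
  have T23 : (((1 : ℝ)) * p002) = 0 :=
    (mul_eq_zero.mp T23').resolve_left (ne_of_gt hden1)
  have T24' : ((1 : ℝ) * a^5 + ((-9 : ℝ)/25) * a) * ((((1 : ℝ)) * q001)) = 0 := by
    linear_combination ((((1 : ℝ)/8) * a^4 + ((-9 : ℝ)/200))) * hE1 + ((((-13 : ℝ)/24) * a^4 + ((39 : ℝ)/200))) * hE2 + ((((5 : ℝ)/12) * a^4 + ((-3 : ℝ)/20))) * hE3 + ((((-7 : ℝ)/24) * a^4 + ((21 : ℝ)/200))) * hE4 + ((((-1 : ℝ)/8) * a^4 + ((9 : ℝ)/200))) * hE5 + ((((5 : ℝ)/12) * a^4 + ((-3 : ℝ)/20))) * hE6 + ((((3 : ℝ)/32) * a^5 + ((-27 : ℝ)/800) * a)) * hB1 + ((((3 : ℝ)/32) * a^5 + ((-27 : ℝ)/800) * a)) * hB5 + ((((-25 : ℝ)/96) * a^4 + ((5 : ℝ)/32) * a^2)) * hA9 + ((((-25 : ℝ)/96) * a^5 + ((3 : ℝ)/32) * a)) * hB9 + ((((25 : ℝ)/96) * a^4 + ((-5 : ℝ)/32) * a^2)) * hA10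 + ((((25 : ℝ)/96) * a^5 + ((-3 : ℝ)/32) * a)) * hB10 + ((((-25 : ℝ)/96) * a^5 + ((3 : ℝ)/32) * a)) * hB14 + ((((-25 : ℝ)/96) * a^4 + ((-5 : ℝ)/32) * a^2)) * hA17 + ((((-25 : ℝ)/96) * a^5 + ((3 : ℝ)/32) * a)) * hB17 + ((((25 : ℝ)/96) * a^4 + ((5 : ℝ)/32) * a^2)) * hA18
  have T24 : (((1 : ℝ)) * q001) = 0 :=
    (mul_eq_zero.mp T24').resolve_left (ne_of_gt hden2)
  have T25' : ((1 : ℝ) * a) * ((((1 : ℝ)) * q002)) = 0 := by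
    linear_combination ((((5 : ℝ)/16))) * hE1 + ((((5 : ℝ)/24))) * hE2 + ((((-25 : ℝ)/48))) * hE3 + ((((5 : ℝ)/16))) * hE4 + ((((5 : ℝ)/24))) * hE5 + ((((-25 : ℝ)/48))) * hE6 + ((((-5 : ℝ)/16) * a)) * hB2 + ((((5 : ℝ)/64) * a)) * hB6 + ((((125 : ℝ)/384) * a)) * hB10 + ((((125 : ℝ)/384) * a)) * hB14
  have T25 : (((1 : ℝ)) * q002) = 0 :=
    (mul_eq_zero.mp T25').resolve_left (ne_of_gt hden1)
  have T26 : (((1 : ℝ)) * r000 + ((-1 : ℝ) * a^4 + (1 : ℝ)) * r002) = 0 := by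
    linear_combination ((((-5 : ℝ)/4) * a^4 + ((3 : ℝ)/20))) * hE1 + ((((-2 : ℝ)/5))) * hE2 + ((((1 : ℝ)/2))) * hE3 + ((((5 : ℝ)/36) * a^4 + ((-7 : ℝ)/20))) * hE4 + ((((-2 : ℝ)/5))) * hE5 + ((((1 : ℝ)/2))) * hE6 + ((((-5 : ℝ)/16) * a^5 + ((9 : ℝ)/80) * a)) * hB1 + ((((-5 : ℝ)/16) * a^5 + ((9 : ℝ)/80) * a)) * hB5 + ((((125 : ℝ)/144) * a^4 + ((-25 : ℝ)/48) * a^2)) * hA9 + ((((125 : ℝ)/144) * a^5 + ((-5 : ℝ)/16) * a)) * hB9 + ((((125 : ℝ)/144) * a^4 + ((25 : ℝ)/48) * a^2)) * hA17 + ((((125 : ℝ)/144) * a^5 + ((-5 : ℝ)/16) * a)) * hB17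
  have T27' : ((1 : ℝ) * a^4 + ((-9 : ℝ)/25)) * ((((1 : ℝ)) * r020 + ((1 : ℝ) * a^2) * r002)) = 0 := by
    linear_combination ((((5 : ℝ)/4) * a^6 + ((-9 : ℝ)/20) * a^2)) * hE1 + ((((-5 : ℝ)/36) * a^6 + ((1 : ℝ)/20) * a^2)) * hE4 + ((((5 : ℝ)/16) * a^7 + ((-9 : ℝ)/80) * a^3)) * hB1 + ((((5 : ℝ)/16) * a^7 + ((-9 : ℝ)/80) * a^3)) * hB5 + ((((-125 : ℝ)/144) * a^6 + ((25 : ℝ)/48) * a^4)) * hA9 + ((((-125 : ℝ)/144) * a^7 + ((5 : ℝ)/16) * a^3)) * hB9 + ((((5 : ℝ)/16) * a^2 + ((-3 : ℝ)/16))) * hA10 + ((((-125 : ℝ)/144) * a^6 + ((-25 : ℝ)/48) * a^4)) * hA17 + ((((-125 : ℝ)/144) * a^7 + ((5 : ℝ)/16) * a^3)) * hB17 + ((((5 : ℝ)/16) * a^2 + ((3 : ℝ)/16))) * hA18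
  have T27 : (((1 : ℝ)) * r020 + ((1 : ℝ) * a^2) * r002) = 0 :=
    (mul_eq_zero.mp T27').resolve_left (ne_of_gt hden3)

  clear hE1 hE2 hE3 hE4 hE5 hE6 hp1 hm1 hA1 hBW1 hB1 hp2 hm2 hA2 hBW2 hB2 hp3 hm3 hA3 hBW3 hB3 hp4 hm4 hBW4 hB4 hp5 hm5 hBW5 hB5 hp6 hm6 hBW6 hB6 hp9 hm9 hA9 hBW9 hB9 hp10 hm10 hA10 hBW10 hB10 hp11 hm11 hA11 hp13 hm13 hBW13 hB13 hp14 hm14 hBW14 hB14 hp17 hm17 hA17 hBW17 hB17 hp18 hm18 hA18 Heval hK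
  by_cases hk : r002 = 0
  · apply hR0
    have e0 : r000 = 0 := by linear_combination T26 + (a^4 - 1) * hk
    have e1 : r100 = 0 := by linear_combination T1
    have e2 : r010 = 0 := by linear_combination T2
    have e3 : r001 = 0 := by linear_combination T5
    have e4 : r200 = 0 := by linear_combination T19 - a^2 * hk
    have e5 : r110 = 0 := by linear_combination T7
    have e6 : r101 = 0 := by linear_combination T3
    have e7 : r020 = 0 := by linear_combination T27 - a^2 * hk
    have e8 : r011 = 0 := by linear_combination T4
    rw [hRrep, e0, e1, e2, e3, e4, e5, e6, e7, e8, hk]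
    simp
  · rw [hPev x₀ y₀ z₀] at hPe
    rw [hQev x₀ y₀ z₀] at hQe
    rw [hRev x₀ y₀ z₀] at hRe
    have hmul : r002 * (z₀^2 - 1 - a^2*(x₀^2 + y₀^2 - a^2)) = 0 := by
      linear_combination hRe - x₀*T1 - y₀*T2 - z₀*T5 - x₀*y₀*T7 - x₀*z₀*T3 - y₀*z₀*T4
        - T26 - x₀^2*T19 - y₀^2*T27
    have hDz : z₀^2 - 1 - a^2*(x₀^2 + y₀^2 - a^2) = 0 := (mul_eq_zero.mp hmul).resolve_left hk
    have h2 : (x₀^2 + y₀^2 - a^2) * ((x₀^2 + y₀^2 - a^2) + a^2) = 0 := by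
      linear_combination htor - hDz
    have hu0 : x₀^2 + y₀^2 - a^2 = 0 := by
      rcases mul_eq_zero.mp h2 with h | h
      · exact h
      · exfalso
        have hma : x₀^2 + y₀^2 - a^2 = -a^2 := by linarith
        have h4 : a^4 + z₀^2 = 1 := by
          calc a^4 + z₀^2 = (x₀^2 + y₀^2 - a^2)^2 + z₀^2 := by rw [hma]; ring
            _ = 1 := htor
        linarith [sq_nonneg z₀, f5]
    have hz2 : z₀^2 = 1 := by
      linear_combination htor - (x₀^2 + y₀^2 - a^2) * hu0
    have hkey : r002 * z₀ * (x₀^2 + y₀^2) = 0 := by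
      linear_combination 2*x₀*hPe + 2*y₀*hQe - 2*x₀*T16 - 2*x₀^2*T9 - 2*x₀*y₀*T11
        - 2*x₀*z₀*T22 - 2*x₀^3*T12 - 2*x₀^2*y₀*T14 - x₀^2*z₀*T18 - 2*x₀*y₀^2*T15
        - 2*x₀*y₀*z₀*T21 - 2*x₀*z₀^2*T23 - 2*y₀*T17 - 2*y₀^2*T10 - 2*y₀*z₀*T24
        - 2*y₀^3*T13 - y₀^2*z₀*T20 - 2*y₀*z₀^2*T25
    have hfin : r002 * z₀ * a^2 = 0 := by linear_combination hkey - r002*z₀*hu0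
    have hz0 : z₀ ≠ 0 := by
      intro h; rw [h] at hz2; norm_num at hz2
    rcases mul_eq_zero.mp hfin with h | h
    · rcases mul_eq_zero.mp h with h' | h'
      · exact hk h'
      · exact hz0 h'
    · exact absurd h (ne_of_gt f2)
end

section
/- Let n ≥ 1, let f, K₁, K₂ ∈ ℝ[x₁,…,xₙ], and let X and Y be polynomial vector fields on ℝⁿ with components P₁,…,Pₙ and Q₁,…,Qₙ respectively, acting on g ∈ ℝ[x₁,…,xₙ] by X(g) = Σᵢ Pᵢ·∂g/∂xᵢ and Y(g) = Σᵢ Qᵢ·∂g/∂xᵢ. If X(f) = K₁·f and Y(f) = K₂·f, then the Lie bracket [X,Y], whose i-th component is X(Qᵢ) − Y(Pᵢ), satisfies [X,Y](f) = (X(K₂) − Y(K₁))·f. In particular, if the hypersurface {f = 0} is an invariant algebraic hypersurface of both X and Y, then it is an invariant algebraic hypersurface of [X,Y], with cofactor X(K₂) − Y(K₁). -/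
open MvPolynomial

lemma pderiv_comm' {n : ℕ} (i j : Fin n) (f : MvPolynomial (Fin n) ℝ) :
    pderiv i (pderiv j f) = pderiv j (pderiv i f) := by
  induction f using MvPolynomial.induction_on with
  | C a => simp
  | add p q hp hq => simp [hp, hq]
  | mul_X p k hp =>
    simp only [pderiv_mul, hp, pderiv_X]
    rcases eq_or_ne k j with h | h <;> rcases eq_or_ne k i with h2 | h2 <;>
      subst_vars <;> simp [Pi.single_apply, hp, *] <;> ring

lemma op_apply {n : ℕ} (A B : Fin n → MvPolynomial (Fin n) ℝ)
    (f : MvPolynomial (Fin n) ℝ) :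
    ∑ i, A i * pderiv i (∑ j, B j * pderiv j f) =
      (∑ i, ∑ j, A i * pderiv i (B j) * pderiv j f) +
      ∑ i, ∑ j, A i * B j * pderiv i (pderiv j f) := by
  rw [← Finset.sum_add_distrib]
  refine Finset.sum_congr rfl fun i _ => ?_
  rw [map_sum, Finset.mul_sum, ← Finset.sum_add_distrib]
  refine Finset.sum_congr rfl fun j _ => ?_
  rw [pderiv_mul]; ring

theorem stmt_13 (n : ℕ) (hn : 1 ≤ n)
    (f K₁ K₂ : MvPolynomial (Fin n) ℝ)
    (P Q : Fin n → MvPolynomial (Fin n) ℝ)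
    (hX : ∑ i, P i * pderiv i f = K₁ * f)
    (hY : ∑ i, Q i * pderiv i f = K₂ * f) :
    ∑ i, ((∑ j, P j * pderiv j (Q i)) - (∑ j, Q j * pderiv j (P i))) * pderiv i f =
      ((∑ j, P j * pderiv j K₂) - (∑ j, Q j * pderiv j K₁)) * f := by
  have hXY := op_apply P Q f
  have hYX := op_apply Q P f
  rw [hY] at hXY
  rw [hX] at hYX
  have hsec : (∑ i, ∑ j, P i * Q j * pderiv i (pderiv j f)) =
      ∑ i, ∑ j, Q i * P j * pderiv i (pderiv j f) := by
    rw [Finset.sum_comm]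
    refine Finset.sum_congr rfl fun i _ => Finset.sum_congr rfl fun j _ => ?_
    rw [pderiv_comm']; ring
  have hXK : ∑ i, P i * pderiv i (K₂ * f) =
      (∑ j, P j * pderiv j K₂) * f + K₂ * (K₁ * f) := by
    rw [← hX, Finset.sum_mul, Finset.mul_sum, ← Finset.sum_add_distrib]
    refine Finset.sum_congr rfl fun i _ => ?_
    rw [pderiv_mul]; ring
  have hYK : ∑ i, Q i * pderiv i (K₁ * f) =
      (∑ j, Q j * pderiv j K₁) * f + K₁ * (K₂ * f) := by
    rw [← hY, Finset.sum_mul, Finset.mul_sum, ← Finset.sum_add_distrib]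
    refine Finset.sum_congr rfl fun i _ => ?_
    rw [pderiv_mul]; ring
  have key : (∑ i, ∑ j, P i * pderiv i (Q j) * pderiv j f) -
      (∑ i, ∑ j, Q i * pderiv i (P j) * pderiv j f) =
      ((∑ j, P j * pderiv j K₂) - (∑ j, Q j * pderiv j K₁)) * f := by
    have := hXY
    rw [hXK] at this
    have h2 := hYX
    rw [hYK] at h2
    have := congrArg₂ (· - ·) this h2
    linear_combination -hsec - this
  rw [← key]
  trans (∑ i, ∑ j, P j * pderiv j (Q i) * pderiv i f) -
      ∑ i, ∑ j, Q j * pderiv j (P i) * pderiv i f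
  · rw [← Finset.sum_sub_distrib]
    exact Finset.sum_congr rfl fun i _ => by rw [sub_mul, Finset.sum_mul, Finset.sum_mul]
  · rw [Finset.sum_comm (f := fun i j => P j * pderiv j (Q i) * pderiv i f),
      Finset.sum_comm (f := fun i j => Q j * pderiv j (P i) * pderiv i f)]
end

section
/- Let A and B be homogeneous polynomials of degree 1 in ℝ[x,y,z], and let X = (A·y, −A·x, 0) and Y = (B·y, −B·x, 0) be pseudo-type-2 vector fields on 𝕋². Then the Lie bracket [X,Y] equals (C·y, −C·x, 0) for some C ∈ ℝ[x,y,z] that is either zero or homogeneous of degree 2; i.e., the Lie bracket of two pseudo-type-2 vector fields on 𝕋² is either zero or a pseudo-type-3 vector field on 𝕋². -/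
open MvPolynomial

lemma pderiv_isHomogeneous {n : ℕ} {p : MvPolynomial (Fin 3) ℝ}
    (hp : p.IsHomogeneous (n + 1)) (i : Fin 3) : (pderiv i p).IsHomogeneous n := by
  conv_lhs => rw [p.as_sum]
  rw [map_sum]
  apply MvPolynomial.IsHomogeneous.sum
  intro v hv
  rw [pderiv_monomial]
  by_cases h : coeff v p * v i = 0
  · rw [h, monomial_zero]
    exact (MvPolynomial.isHomogeneous_zero _ _ _)
  · have hvi : v i ≠ 0 := fun h0 => h (by simp [h0])
    have hdeg : Finsupp.weight (1 : Fin 3 → ℕ) v = n + 1 := hp (mem_support_iff.mp hv)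
    have hle : Finsupp.single i 1 ≤ v :=
      Finsupp.single_le_iff.mpr (Nat.one_le_iff_ne_zero.mpr hvi)
    have hcan : (v - Finsupp.single i 1) + Finsupp.single i 1 = v := tsub_add_cancel_of_le hle
    have hws : Finsupp.weight (1 : Fin 3 → ℕ) (Finsupp.single i 1) = 1 := by
      simp [Finsupp.weight_apply, Finsupp.sum_single_index]
    have hw : Finsupp.weight (1 : Fin 3 → ℕ) (v - Finsupp.single i 1) = n := by
      have h2 := congrArg (Finsupp.weight (1 : Fin 3 → ℕ)) hcan
      rw [map_add, hws, hdeg] at h2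
      omega
    apply isHomogeneous_monomial
    rw [Finsupp.degree_eq_weight_one]
    exact hw

theorem stmt_14 (a : ℝ) (ha : 1 < a) (A B : MvPolynomial (Fin 3) ℝ)
    (hA : A.IsHomogeneous 1) (hB : B.IsHomogeneous 1) :
    ∃ C' : MvPolynomial (Fin 3) ℝ, (C' = 0 ∨ C'.IsHomogeneous 2) ∧
      vf (A * X 1) (-(A * X 0)) 0 (B * X 1) -
        vf (B * X 1) (-(B * X 0)) 0 (A * X 1) = C' * X 1 ∧
      vf (A * X 1) (-(A * X 0)) 0 (-(B * X 0)) -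
        vf (B * X 1) (-(B * X 0)) 0 (-(A * X 0)) = -(C' * X 0) ∧
      vf (A * X 1) (-(A * X 0)) 0 (0 : MvPolynomial (Fin 3) ℝ) -
        vf (B * X 1) (-(B * X 0)) 0 (0 : MvPolynomial (Fin 3) ℝ) = 0 := by
  refine ⟨X 1 * (A * pderiv 0 B - B * pderiv 0 A) - X 0 * (A * pderiv 1 B - B * pderiv 1 A),
    Or.inr ?_, ?_, ?_, ?_⟩
  · have h0B := pderiv_isHomogeneous (n := 0) hB
    have h0A := pderiv_isHomogeneous (n := 0) hA
    have hX : ∀ i : Fin 3, (X i : MvPolynomial (Fin 3) ℝ).IsHomogeneous 1 :=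
      fun i => isHomogeneous_X _ _
    exact (((hX 1).mul ((hA.mul (h0B 0)).sub (hB.mul (h0A 0)))).sub
      ((hX 0).mul ((hA.mul (h0B 1)).sub (hB.mul (h0A 1)))))
  · simp only [vf, map_mul, pderiv_X, map_neg, map_zero]
    simp [pderiv_X, Pi.single_apply]
    ring
  · simp only [vf, map_mul, pderiv_X, map_neg, map_zero]
    simp [pderiv_X, Pi.single_apply]
    ring
  · simp [vf]
end
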